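/- arXiv:2005.09893 — 4 statements merged into one kernel-verified Lean document; each statement's English description precedes it below -/
import Mathlib

section
/- Let A₁, A₂, A₃ be finite subsets of ℝ with |A₁| ≤ |A₂| ≤ |A₃|. Then there exist absolute constants C > 0 and c ≥ 0 such that T°(A₁,A₂,A₃) ≤ C·|A₁|·|A₂|^{5/3}·|A₃|^{4/3}·(log(2+|A₃|))^c. -/
open Finset

/-- `To A₁ A₂ A₃` counts triples `(u₁, u₂, u₃)` of pairwise distinct, collinear points
in the plane with `uᵢ ∈ Aᵢ × Aᵢ`. -/
noncomputable def To (A₁ A₂ A₃ : Finset ℝ) : ℕ :=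
  Set.ncard {p : (ℝ × ℝ) × (ℝ × ℝ) × (ℝ × ℝ) |
    p.1 ∈ (A₁ : Set ℝ) ×ˢ (A₁ : Set ℝ) ∧
    p.2.1 ∈ (A₂ : Set ℝ) ×ˢ (A₂ : Set ℝ) ∧
    p.2.2 ∈ (A₃ : Set ℝ) ×ˢ (A₃ : Set ℝ) ∧
    p.1 ≠ p.2.1 ∧ p.1 ≠ p.2.2 ∧ p.2.1 ≠ p.2.2 ∧
    Collinear ℝ {p.1, p.2.1, p.2.2}}

/-!
Every counted triple lies on the line `ℓ` through its first two points, so `T°` is at most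
`∑ₗ aₗ bₗ cₗ`, where `aₗ, bₗ, cₗ` count the points of `ℓ` in `A₁ × A₁`, `A₂ × A₂`, `A₃ × A₃`.
Sorting the lines into `O(log³ |A₃|)` dyadic classes `aₗ ≈ α`, `bₗ ≈ β`, `cₗ ≈ γ`, a class of
`N` lines obeys the Szemerédi–Trotter bound for grids, `k³ N ≲ |A|⁴` for `k ≥ 2` points per line
on `A × A`, in each of the three grids, and the pair count `α β N ≲ |A₁|² |A₂|²` (two points span
at most one line). Multiplying suitable powers of these gives `(α β γ N)⁶ ≲ |A₁|⁶ |A₂|¹⁰ |A₃|⁸`.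

The grid bound comes from cutting `A × A` into `r × r` cells, products of blocks of consecutive
elements of `A`: a line meets at most `2r - 1` cells, since the cells it meets form a chain for
the product order (or its reverse in the second coordinate), and within the cells the points of a
line are paid for by the pairs of points they span.
-/

open scoped Classical

theorem card_mul_card_le_two_mul_card_filter_ne {α : Type*} {X Y : Finset α}
    (h : ∃ x ∈ X, ∃ y ∈ Y, x ≠ y) : #X * #Y ≤ 2 * #{z ∈ X ×ˢ Y | z.1 ≠ z.2} := by
  obtain ⟨x, hx, y, hy, hxy⟩ := h
  have hpos : 0 < #{z ∈ X ×ˢ Y | z.1 ≠ z.2} :=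
    card_pos.2 ⟨(x, y), mem_filter.2 ⟨mem_product.2 ⟨hx, hy⟩, hxy⟩⟩
  have hdiag : #{z ∈ X ×ˢ Y | ¬z.1 ≠ z.2} = #(X ∩ Y) := by
    rw [← card_image_of_injective _ (fun _ _ h ↦ congrArg Prod.fst h :
      Function.Injective fun a : α ↦ (a, a))]
    congr 1
    ext ⟨a, b⟩
    simp only [ne_eq, not_not, mem_filter, mem_product, mem_image, mem_inter, Prod.mk.injEq]
    grind
  have hsplit := card_filter_add_card_filter_not (s := X ×ˢ Y) (fun z ↦ z.1 ≠ z.2)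
  rw [card_product, hdiag] at hsplit
  have hX := card_le_card (inter_subset_left (s₁ := X) (s₂ := Y))
  have hY := card_le_card (inter_subset_right (s₁ := X) (s₂ := Y))
  -- `#(X ∩ Y)` is at most half of `#X * #Y`, unless `#X = #Y = 1` and then `X ∩ Y = ∅`
  rcases Nat.lt_or_ge #X 2 with hX2 | hX2 <;> rcases Nat.lt_or_ge #Y 2 with hY2 | hY2 <;> nlinarith

theorem card_le_card_image_add_sum_card_offDiag {α β : Type*} [DecidableEq β] (T : Finset α)
    (κ : α → β) :
    #T ≤ #(T.image κ) + ∑ c ∈ T.image κ, #{p ∈ T | κ p = c}.offDiag := by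
  rw [card_eq_sum_card_image κ T, card_eq_sum_ones (T.image κ), ← sum_add_distrib]
  refine sum_le_sum fun c hc ↦ ?_
  obtain ⟨p, hp, rfl⟩ := mem_image.1 hc
  have hpos : 0 < #{q ∈ T | κ q = κ p} := card_pos.2 ⟨p, mem_filter.2 ⟨hp, rfl⟩⟩
  rw [offDiag_card]
  generalize #{q ∈ T | κ q = κ p} = x at hpos ⊢
  have : x + x ≤ x * x + 1 := by nlinarith
  omega

theorem card_image_le_of_forall_le_and_le_or_le_and_le {β : Type*} {T : Finset β} {u v : β → ℕ}
    {r : ℕ} (hr : ∀ p ∈ T, u p < r ∧ v p < r)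
    (hchain : ∀ p ∈ T, ∀ q ∈ T, u p ≤ u q ∧ v p ≤ v q ∨ u q ≤ u p ∧ v q ≤ v p) :
    #(T.image fun p ↦ (u p, v p)) ≤ 2 * r - 1 := by
  refine (card_le_card_of_injOn (fun c ↦ c.1 + c.2) (t := range (2 * r - 1)) ?_ ?_).trans_eq
    (card_range _)
  · rintro _ hc
    obtain ⟨p, hp, rfl⟩ := mem_image.1 hc
    have := hr p hp
    simp only [coe_range, Set.mem_Iio]
    omega
  · rintro _ hc _ hc' h
    obtain ⟨p, hp, rfl⟩ := mem_image.1 hc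
    obtain ⟨q, hq, rfl⟩ := mem_image.1 hc'
    simp only at h
    rcases hchain p hp q hq with hpq | hpq <;> exact Prod.ext (by omega) (by omega)

section Rank

variable {α : Type*} [LinearOrder α] (A : Finset α)

def rankIn (x : α) : ℕ := #{a ∈ A | a < x}

theorem rankIn_mono : Monotone (rankIn A) :=
  fun _ _ hxy ↦ card_le_card (monotone_filter_right _ fun _ _ ha ↦ ha.trans_le hxy)

theorem rankIn_lt_card {x : α} (hx : x ∈ A) : rankIn A x < #A :=
  card_lt_card (filter_ssubset.2 ⟨x, hx, lt_irrefl x⟩)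

theorem rankIn_lt_rankIn {x y : α} (hx : x ∈ A) (hxy : x < y) : rankIn A x < rankIn A y :=
  card_lt_card <| ssubset_iff_of_subset (monotone_filter_right _ fun _ _ ha ↦ ha.trans hxy) |>.2
    ⟨x, mem_filter.2 ⟨hx, hxy⟩, fun h ↦ lt_irrefl x (mem_filter.1 h).2⟩

theorem rankIn_injOn : Set.InjOn (rankIn A) A := by
  intro x hx y hy h
  by_contra hne
  rcases lt_or_gt_of_ne hne with hlt | hlt
  · exact (rankIn_lt_rankIn A hx hlt).ne h
  · exact (rankIn_lt_rankIn A hy hlt).ne' h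

theorem card_filter_rankIn_div_eq_le {g : ℕ} (hg : 0 < g) (i : ℕ) :
    #{a ∈ A | rankIn A a / g = i} ≤ g := by
  refine (card_le_card_of_injOn (rankIn A) (t := Ico (i * g) (i * g + g)) ?_
    fun x hx y hy ↦ rankIn_injOn A (mem_filter.1 hx).1 (mem_filter.1 hy).1).trans ?_
  · intro a ha
    have := (Nat.div_eq_iff hg).1 (mem_filter.1 ha).2
    simp only [coe_Ico, Set.mem_Ico]
    omega
  · simp

end Rank

section IncidenceGeometry

variable {k V P : Type*} [DivisionRing k] [AddCommGroup V] [Module k V] [AddTorsor V P]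

theorem collinear_affineSpan_pair (u v : P) : Collinear k (line[k, u, v] : Set P) := by
  unfold Collinear
  rw [← AffineSubspace.direction, direction_affineSpan]
  exact collinear_pair k u v

theorem Collinear.eq_affineSpan_pair {ℓ : AffineSubspace k P}
    (hℓ : Collinear k (ℓ : Set P)) {x y : P} (hx : x ∈ ℓ) (hy : y ∈ ℓ) (hxy : x ≠ y) :
    ℓ = line[k, x, y] :=
  le_antisymm (fun _ hp ↦ hℓ.mem_affineSpan_of_mem_of_ne hx hy hp hxy)
    (affineSpan_pair_le_of_mem_of_mem hx hy)

theorem sum_card_filter_pair_mem_le {F : Finset (AffineSubspace k P)}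
    (hF : ∀ ℓ ∈ F, Collinear k (ℓ : Set P)) (D : Finset (P × P)) :
    ∑ ℓ ∈ F, #{z ∈ D | z.1 ≠ z.2 ∧ z.1 ∈ ℓ ∧ z.2 ∈ ℓ} ≤ #D := by
  rw [← card_biUnion]
  · exact card_le_card (biUnion_subset.2 fun _ _ ↦ filter_subset _ _)
  · intro ℓ hℓ ℓ' hℓ' hne
    refine disjoint_left.2 fun z hz hz' ↦ hne ?_
    simp only [mem_filter] at hz hz'
    rw [(hF ℓ hℓ).eq_affineSpan_pair hz.2.2.1 hz.2.2.2 hz.2.1,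
      (hF ℓ' hℓ').eq_affineSpan_pair hz'.2.2.1 hz'.2.2.2 hz'.2.1]

theorem sum_card_offDiag_filter_mem_le {F : Finset (AffineSubspace k P)}
    (hF : ∀ ℓ ∈ F, Collinear k (ℓ : Set P)) (G : Finset P) :
    ∑ ℓ ∈ F, #{p ∈ G | p ∈ ℓ}.offDiag ≤ #G ^ 2 := by
  calc ∑ ℓ ∈ F, #{p ∈ G | p ∈ ℓ}.offDiag
      = ∑ ℓ ∈ F, #{z ∈ G ×ˢ G | z.1 ≠ z.2 ∧ z.1 ∈ ℓ ∧ z.2 ∈ ℓ} := by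
        refine sum_congr rfl fun ℓ _ ↦ congrArg card ?_
        ext z
        simp only [mem_offDiag, mem_filter, mem_product]
        tauto
    _ ≤ #(G ×ˢ G) := sum_card_filter_pair_mem_le hF _
    _ = #G ^ 2 := by rw [card_product, sq]

theorem sum_card_mul_card_le {F : Finset (AffineSubspace k P)}
    (hF : ∀ ℓ ∈ F, Collinear k (ℓ : Set P)) (G H : Finset P)
    (hpair : ∀ ℓ ∈ F, ∃ u ∈ G, ∃ v ∈ H, u ≠ v ∧ u ∈ ℓ ∧ v ∈ ℓ) :
    ∑ ℓ ∈ F, #{p ∈ G | p ∈ ℓ} * #{p ∈ H | p ∈ ℓ} ≤ 2 * (#G * #H) := by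
  calc ∑ ℓ ∈ F, #{p ∈ G | p ∈ ℓ} * #{p ∈ H | p ∈ ℓ}
      ≤ ∑ ℓ ∈ F, 2 * #{z ∈ G ×ˢ H | z.1 ≠ z.2 ∧ z.1 ∈ ℓ ∧ z.2 ∈ ℓ} := by
        refine sum_le_sum fun ℓ hℓ ↦ ?_
        obtain ⟨u, hu, v, hv, huv, huℓ, hvℓ⟩ := hpair ℓ hℓ
        refine (card_mul_card_le_two_mul_card_filter_ne
          ⟨u, mem_filter.2 ⟨hu, huℓ⟩, v, mem_filter.2 ⟨hv, hvℓ⟩, huv⟩).trans_eq ?_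
        congr 2
        ext z
        simp only [mem_filter, mem_product]
        tauto
    _ ≤ 2 * (#G * #H) := by
        rw [← mul_sum, ← card_product]
        exact Nat.mul_le_mul_left 2 (sum_card_filter_pair_mem_le hF _)

theorem sum_card_filter_mem_le_of_cells {F : Finset (AffineSubspace k P)}
    (hF : ∀ ℓ ∈ F, Collinear k (ℓ : Set P)) (G : Finset P) {β : Type*} [DecidableEq β] (κ : P → β) :
    ∑ ℓ ∈ F, #{p ∈ G | p ∈ ℓ} ≤
      ∑ ℓ ∈ F, #({p ∈ G | p ∈ ℓ}.image κ) + ∑ c ∈ G.image κ, #{p ∈ G | κ p = c} ^ 2 := by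
  calc ∑ ℓ ∈ F, #{p ∈ G | p ∈ ℓ}
      ≤ ∑ ℓ ∈ F, (#({p ∈ G | p ∈ ℓ}.image κ) +
          ∑ c ∈ G.image κ, #{p ∈ {p ∈ G | κ p = c} | p ∈ ℓ}.offDiag) := by
        refine sum_le_sum fun ℓ _ ↦ (card_le_card_image_add_sum_card_offDiag _ κ).trans ?_
        refine Nat.add_le_add_left ((sum_congr rfl fun c _ ↦ by rw [filter_comm]).trans_le
          (sum_le_sum_of_subset_of_nonneg (image_subset_image (filter_subset _ _))
            fun _ _ _ ↦ Nat.zero_le _)) _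
    _ = ∑ ℓ ∈ F, #({p ∈ G | p ∈ ℓ}.image κ) +
          ∑ c ∈ G.image κ, ∑ ℓ ∈ F, #{p ∈ {p ∈ G | κ p = c} | p ∈ ℓ}.offDiag := by
        rw [sum_add_distrib, sum_comm]
    _ ≤ _ := Nat.add_le_add_left (sum_le_sum fun c _ ↦ sum_card_offDiag_filter_mem_le hF _) _

end IncidenceGeometry

theorem Collinear.injOn_fst_or_injOn_snd {s : Set (ℝ × ℝ)} (hs : Collinear ℝ s) :
    s.InjOn Prod.fst ∨ s.InjOn Prod.snd := by
  obtain ⟨p₀, v, hv⟩ := (collinear_iff_exists_forall_eq_smul_vadd s).1 hs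
  by_cases hv₁ : v.1 = 0
  · right
    intro p hp q hq h
    obtain ⟨r, rfl⟩ := hv p hp
    obtain ⟨r', rfl⟩ := hv q hq
    exact Prod.ext (by simp [hv₁]) h
  · left
    intro p hp q hq h
    obtain ⟨r, rfl⟩ := hv p hp
    obtain ⟨r', rfl⟩ := hv q hq
    have : r = r' := by
      simp only [vadd_eq_add, Prod.fst_add, Prod.smul_fst, smul_eq_mul, add_left_inj] at h
      exact mul_right_cancel₀ hv₁ h
    rw [this]

theorem Collinear.forall_mul_sub_nonneg_or_nonpos {s : Set (ℝ × ℝ)} (hs : Collinear ℝ s) :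
    (∀ p ∈ s, ∀ q ∈ s, 0 ≤ (q.1 - p.1) * (q.2 - p.2)) ∨
      ∀ p ∈ s, ∀ q ∈ s, (q.1 - p.1) * (q.2 - p.2) ≤ 0 := by
  obtain ⟨p₀, v, hv⟩ := (collinear_iff_exists_forall_eq_smul_vadd s).1 hs
  have key : ∀ p ∈ s, ∀ q ∈ s, ∃ t : ℝ, (q.1 - p.1) * (q.2 - p.2) = t ^ 2 * (v.1 * v.2) := by
    intro p hp q hq
    obtain ⟨r, rfl⟩ := hv p hp
    obtain ⟨r', rfl⟩ := hv q hq
    exact ⟨r' - r, by simp only [vadd_eq_add, Prod.fst_add, Prod.snd_add, Prod.smul_fst,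
      Prod.smul_snd, smul_eq_mul]; ring⟩
  rcases le_total 0 (v.1 * v.2) with h | h
  · left
    intro p hp q hq
    obtain ⟨t, ht⟩ := key p hp q hq
    rw [ht]
    positivity
  · right
    intro p hp q hq
    obtain ⟨t, ht⟩ := key p hp q hq
    rw [ht]
    exact mul_nonpos_of_nonneg_of_nonpos (sq_nonneg t) h

theorem card_filter_mem_grid_le {s : Set (ℝ × ℝ)} (hs : Collinear ℝ s) (A : Finset ℝ) :
    #{p ∈ A ×ˢ A | p ∈ s} ≤ #A := by
  rcases hs.injOn_fst_or_injOn_snd with hinj | hinj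
  · refine card_le_card_of_injOn Prod.fst (fun p hp ↦ (mem_product.1 (mem_filter.1 hp).1).1) ?_
    exact hinj.mono fun p hp ↦ (mem_filter.1 hp).2
  · refine card_le_card_of_injOn Prod.snd (fun p hp ↦ (mem_product.1 (mem_filter.1 hp).1).2) ?_
    exact hinj.mono fun p hp ↦ (mem_filter.1 hp).2

theorem card_image_le_of_collinear {s : Set (ℝ × ℝ)} (hs : Collinear ℝ s) {T : Finset (ℝ × ℝ)}
    (hT : ↑T ⊆ s) {f g : ℝ → ℕ} (hf : Monotone f) (hg : Monotone g) {r : ℕ}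
    (hr : ∀ p ∈ T, f p.1 < r ∧ g p.2 < r) :
    #(T.image fun p ↦ (f p.1, g p.2)) ≤ 2 * r - 1 := by
  rcases hs.forall_mul_sub_nonneg_or_nonpos with hmono | hanti
  · refine card_image_le_of_forall_le_and_le_or_le_and_le hr fun p hp q hq ↦ ?_
    rcases mul_nonneg_iff.1 (hmono p (hT hp) q (hT hq)) with ⟨h₁, h₂⟩ | ⟨h₁, h₂⟩
    · exact .inl ⟨hf (by linarith), hg (by linarith)⟩
    · exact .inr ⟨hf (by linarith), hg (by linarith)⟩
  · -- on a line of negative slope, number the rows of cells downwards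
    have hrelabel : (T.image fun p ↦ (f p.1, r - 1 - g p.2)) =
        (T.image fun p ↦ (f p.1, g p.2)).image fun c ↦ (c.1, r - 1 - c.2) := by
      rw [image_image]
      rfl
    rw [← card_image_of_injOn (f := fun c : ℕ × ℕ ↦ (c.1, r - 1 - c.2)), ← hrelabel]
    · refine card_image_le_of_forall_le_and_le_or_le_and_le
        (fun p hp ↦ ⟨(hr p hp).1, by have := hr p hp; omega⟩) fun p hp q hq ↦ ?_
      rcases mul_nonpos_iff.1 (hanti p (hT hp) q (hT hq)) with ⟨h₁, h₂⟩ | ⟨h₁, h₂⟩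
      · exact .inl ⟨hf (by linarith), Nat.sub_le_sub_left (hg (by linarith)) _⟩
      · exact .inr ⟨hf (by linarith), Nat.sub_le_sub_left (hg (by linarith)) _⟩
    · rintro _ hc _ hc' h
      obtain ⟨p, hp, rfl⟩ := mem_image.1 hc
      obtain ⟨q, hq, rfl⟩ := mem_image.1 hc'
      have := hr p hp
      have := hr q hq
      simp only [Prod.mk.injEq] at h ⊢
      omega

theorem sum_card_filter_mem_grid_le {A : Finset ℝ} {F : Finset (AffineSubspace ℝ (ℝ × ℝ))}
    (hF : ∀ ℓ ∈ F, Collinear ℝ (ℓ : Set (ℝ × ℝ))) {g r : ℕ} (hg : 0 < g) (hgr : #A ≤ g * r) :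
    ∑ ℓ ∈ F, #{p ∈ A ×ˢ A | p ∈ ℓ} ≤ (2 * r - 1) * #F + g * g * (#A * #A) := by
  set κ : ℝ × ℝ → ℕ × ℕ := fun p ↦ (rankIn A p.1 / g, rankIn A p.2 / g)
  have hblock : ∀ x ∈ A, rankIn A x / g < r := fun x hx ↦
    (Nat.div_lt_iff_lt_mul hg).2 ((rankIn_lt_card A hx).trans_le (by rw [mul_comm]; exact hgr))
  have hcells : ∀ ℓ ∈ F, #({p ∈ A ×ˢ A | p ∈ ℓ}.image κ) ≤ 2 * r - 1 := fun ℓ hℓ ↦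
    card_image_le_of_collinear (hF ℓ hℓ) (fun p hp ↦ (mem_filter.1 hp).2)
      (fun _ _ h ↦ Nat.div_le_div_right (rankIn_mono A h))
      (fun _ _ h ↦ Nat.div_le_div_right (rankIn_mono A h)) fun p hp ↦ by
        obtain ⟨h₁, h₂⟩ := mem_product.1 (mem_filter.1 hp).1
        exact ⟨hblock _ h₁, hblock _ h₂⟩
  have hcell : ∀ c, #{p ∈ A ×ˢ A | κ p = c} ≤ g * g := fun c ↦ by
    refine (card_le_card fun p hp ↦ ?_).trans ((card_product _ _).trans_le
      (Nat.mul_le_mul (card_filter_rankIn_div_eq_le A hg c.1)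
        (card_filter_rankIn_div_eq_le A hg c.2)))
    obtain ⟨hpA, hpc⟩ := mem_filter.1 hp
    obtain ⟨h₁, h₂⟩ := mem_product.1 hpA
    exact mem_product.2 ⟨mem_filter.2 ⟨h₁, by rw [← hpc]⟩, mem_filter.2 ⟨h₂, by rw [← hpc]⟩⟩
  calc ∑ ℓ ∈ F, #{p ∈ A ×ˢ A | p ∈ ℓ}
      ≤ ∑ ℓ ∈ F, #({p ∈ A ×ˢ A | p ∈ ℓ}.image κ) +
          ∑ c ∈ (A ×ˢ A).image κ, #{p ∈ A ×ˢ A | κ p = c} ^ 2 :=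
        sum_card_filter_mem_le_of_cells hF _ κ
    _ ≤ #F • (2 * r - 1) + ∑ c ∈ (A ×ˢ A).image κ, g * g * #{p ∈ A ×ˢ A | κ p = c} := by
        refine Nat.add_le_add (sum_le_card_nsmul _ _ _ hcells) (sum_le_sum fun c _ ↦ ?_)
        rw [sq]
        exact Nat.mul_le_mul_right _ (hcell c)
    _ = (2 * r - 1) * #F + g * g * (#A * #A) := by
        rw [← mul_sum, ← card_eq_sum_card_image, card_product, smul_eq_mul, mul_comm]

theorem szemeredi_trotter_grid {A : Finset ℝ} {F : Finset (AffineSubspace ℝ (ℝ × ℝ))}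
    (hF : ∀ ℓ ∈ F, Collinear ℝ (ℓ : Set (ℝ × ℝ))) {k : ℕ} (hk : 2 ≤ k)
    (hrich : ∀ ℓ ∈ F, k ≤ #{p ∈ A ×ˢ A | p ∈ ℓ}) :
    k ^ 3 * #F ≤ 256 * #A ^ 4 := by
  obtain rfl | ⟨ℓ₀, hℓ₀⟩ := F.eq_empty_or_nonempty
  · simp
  set q := #A
  have hkq : k ≤ q := (hrich ℓ₀ hℓ₀).trans (card_filter_mem_grid_le (hF ℓ₀ hℓ₀) A)
  -- `r ≈ k / 4` blocks of `g ≈ q / r` elements: each line then meets at most about `k / 2` cells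
  set r := (k + 3) / 4
  set g := (q + r - 1) / r
  have hr : 0 < r := by omega
  have hrg : r * g ≤ q + r - 1 := Nat.mul_div_le _ _
  have hqgr : q ≤ g * r := by
    have : q + r - 1 < g * r + r := Nat.lt_div_mul_add hr
    omega
  have hg : 0 < g := Nat.pos_of_ne_zero fun h ↦ by rw [h, zero_mul] at hqgr; omega
  have hinc : k * #F ≤ (2 * r - 1) * #F + g * g * (q * q) :=
    calc k * #F = #F • k := by rw [smul_eq_mul, mul_comm]
      _ ≤ ∑ ℓ ∈ F, #{p ∈ A ×ˢ A | p ∈ ℓ} := card_nsmul_le_sum _ _ _ hrich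
      _ ≤ _ := sum_card_filter_mem_grid_le hF hg hqgr
  have hkg : k * g ≤ 8 * q :=
    calc k * g ≤ 4 * r * g := Nat.mul_le_mul_right _ (by omega)
      _ = 4 * (r * g) := by ring
      _ ≤ 8 * q := by omega
  have hkF : k * #F ≤ 4 * (g * g * (q * q)) := by
    have : 4 * (2 * r - 1) * #F ≤ 3 * k * #F := Nat.mul_le_mul_right _ (by omega)
    nlinarith
  calc k ^ 3 * #F = k * k * (k * #F) := by ring
    _ ≤ k * k * (4 * (g * g * (q * q))) := Nat.mul_le_mul_left _ hkF
    _ = 4 * ((k * g) * (k * g)) * (q * q) := by ring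
    _ ≤ 4 * ((8 * q) * (8 * q)) * (q * q) := by gcongr
    _ = 256 * q ^ 4 := by ring

theorem sum_mul_mul_le_sum_dyadic {ι : Type*} (s : Finset ι) (a b c : ι → ℕ) {m n p : ℕ}
    (ha : ∀ i ∈ s, a i ≤ m) (hb : ∀ i ∈ s, b i ≤ n) (hc : ∀ i ∈ s, c i ≤ p) :
    ∑ i ∈ s, a i * b i * c i ≤
      ∑ t ∈ range (Nat.log 2 m + 1) ×ˢ range (Nat.log 2 n + 1) ×ˢ range (Nat.log 2 p + 1),
        8 * (2 ^ t.1 * 2 ^ t.2.1 * 2 ^ t.2.2) *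
          #{i ∈ s | (Nat.log 2 (a i), Nat.log 2 (b i), Nat.log 2 (c i)) = t} := by
  have hmaps : ∀ i ∈ s, (Nat.log 2 (a i), Nat.log 2 (b i), Nat.log 2 (c i)) ∈
      range (Nat.log 2 m + 1) ×ˢ range (Nat.log 2 n + 1) ×ˢ range (Nat.log 2 p + 1) := by
    intro i hi
    simp only [mem_product, mem_range, Nat.lt_succ_iff]
    exact ⟨Nat.log_mono_right (ha i hi), Nat.log_mono_right (hb i hi),
      Nat.log_mono_right (hc i hi)⟩
  rw [← sum_fiberwise_of_maps_to hmaps]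
  refine sum_le_sum fun t _ ↦ (sum_le_card_nsmul _ _ _ fun i hi ↦ ?_).trans_eq
    (by rw [smul_eq_mul, mul_comm])
  obtain rfl := (mem_filter.1 hi).2
  have hdyadic : ∀ x : ℕ, x ≤ 2 * 2 ^ Nat.log 2 x := fun x ↦
    (Nat.lt_pow_succ_log_self one_lt_two x).le.trans_eq (by rw [pow_succ, mul_comm])
  calc a i * b i * c i
      ≤ (2 * 2 ^ Nat.log 2 (a i)) * (2 * 2 ^ Nat.log 2 (b i)) * (2 * 2 ^ Nat.log 2 (c i)) := by
        gcongr <;> exact hdyadic _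
    _ = _ := by ring

theorem pow_six_le_of_incidence_bounds {α β γ N m n p : ℕ} (hmn : m ≤ n) (hnp : n ≤ p)
    (hα : 0 < α) (hβ : 0 < β) (hγ : 0 < γ) (hpair : α * β * N ≤ 2 * (m ^ 2 * n ^ 2))
    (hα₂ : 2 ≤ α → α ^ 3 * N ≤ 256 * m ^ 4) (hβ₂ : 2 ≤ β → β ^ 3 * N ≤ 256 * n ^ 4)
    (hγ₂ : 2 ≤ γ → γ ^ 3 * N ≤ 256 * p ^ 4) :
    (α * β * γ * N) ^ 6 ≤ 2 ^ 48 * m ^ 6 * n ^ 10 * p ^ 8 := by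
  have hN : N ≤ 2 * (m ^ 2 * n ^ 2) :=
    (Nat.le_mul_of_pos_left N (Nat.mul_pos hα hβ)).trans hpair
  -- a single point per line is already controlled by the pair count
  have hcube : ∀ {δ X : ℕ}, m ≤ X → n ≤ X → 0 < δ → (2 ≤ δ → δ ^ 3 * N ≤ 256 * X ^ 4) →
      δ ^ 3 * N ≤ 256 * X ^ 4 := fun {δ X} hmX hnX hδ hδ₂ ↦ by
    rcases Nat.lt_or_ge δ 2 with h | h
    · obtain rfl : δ = 1 := by omega
      calc 1 ^ 3 * N ≤ 2 * (X ^ 2 * X ^ 2) := by rw [one_pow, one_mul]; exact hN.trans (by gcongr)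
        _ ≤ 256 * X ^ 4 := by ring_nf; omega
    · exact hδ₂ h
  have hβ₃ := hcube hmn le_rfl hβ hβ₂
  have hγ₃ := hcube (hmn.trans hnp) hnp hγ hγ₂
  rcases Nat.lt_or_ge α 2 with h | h
  · obtain rfl : α = 1 := by omega
    calc (1 * β * γ * N) ^ 6 = (β ^ 3 * N) * (γ ^ 3 * N) ^ 2 * (1 * β * N) ^ 3 := by ring
      _ ≤ (256 * n ^ 4) * (256 * p ^ 4) ^ 2 * (2 * (m ^ 2 * n ^ 2)) ^ 3 := by
        gcongr ?_ * ?_ ^ 2 * ?_ ^ 3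
      _ = 2 ^ 27 * m ^ 6 * n ^ 10 * p ^ 8 := by ring
      _ ≤ 2 ^ 48 * m ^ 6 * n ^ 10 * p ^ 8 := by gcongr <;> norm_num
  · calc (α * β * γ * N) ^ 6 = (α ^ 3 * N) ^ 2 * (β ^ 3 * N) ^ 2 * (γ ^ 3 * N) ^ 2 := by ring
      _ ≤ (256 * m ^ 4) ^ 2 * (256 * n ^ 4) ^ 2 * (256 * p ^ 4) ^ 2 := by
        gcongr ?_ ^ 2 * ?_ ^ 2 * ?_ ^ 2
        exact hα₂ h
      _ = 2 ^ 48 * m ^ 6 * n ^ 8 * p ^ 8 * m ^ 2 := by ring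
      _ ≤ 2 ^ 48 * m ^ 6 * n ^ 8 * p ^ 8 * n ^ 2 := by gcongr
      _ = 2 ^ 48 * m ^ 6 * n ^ 10 * p ^ 8 := by ring

theorem cast_natLog_add_one_le {x p : ℕ} (hxp : x ≤ p) :
    (Nat.log 2 x : ℝ) + 1 ≤ 3 * Real.log (2 + p) := by
  have hpow : (2 : ℝ) ^ Nat.log 2 x ≤ 2 + p := by
    rcases Nat.eq_zero_or_pos x with rfl | hx
    · simp only [Nat.log_zero_right, pow_zero]
      linarith [(Nat.cast_nonneg p : (0 : ℝ) ≤ p)]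
    · have : ((2 ^ Nat.log 2 x : ℕ) : ℝ) ≤ p := by
        exact_mod_cast (Nat.pow_log_le_self 2 hx.ne').trans hxp
      push_cast at this
      linarith
  have hlog : (Nat.log 2 x : ℝ) * Real.log 2 ≤ Real.log (2 + p) := by
    rw [← Real.log_pow]
    exact Real.log_le_log (by positivity) hpow
  have hlog₂ : Real.log 2 ≤ Real.log (2 + p) :=
    Real.log_le_log (by norm_num) (by linarith [(Nat.cast_nonneg p : (0 : ℝ) ≤ p)])
  nlinarith [Real.log_two_gt_d9]

theorem cast_prod_natLog_add_one_le {m n p : ℕ} (hmp : m ≤ p) (hnp : n ≤ p) :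
    (((Nat.log 2 m + 1) * (Nat.log 2 n + 1) * (Nat.log 2 p + 1) : ℕ) : ℝ) ≤
      27 * Real.log (2 + p) ^ 3 := by
  have h₁ := cast_natLog_add_one_le hmp
  have h₂ := cast_natLog_add_one_le hnp
  have h₃ := cast_natLog_add_one_le (le_refl p)
  have hL : 0 ≤ 3 * Real.log (2 + p) := (by positivity : (0 : ℝ) ≤ _).trans h₃
  push_cast
  calc ((Nat.log 2 m : ℝ) + 1) * ((Nat.log 2 n : ℝ) + 1) * ((Nat.log 2 p : ℝ) + 1)
      ≤ (3 * Real.log (2 + p)) * (3 * Real.log (2 + p)) * (3 * Real.log (2 + p)) :=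
        mul_le_mul (mul_le_mul h₁ h₂ (by positivity) hL) h₃ (by positivity) (mul_nonneg hL hL)
    _ = 27 * Real.log (2 + p) ^ 3 := by ring

theorem cast_le_of_pow_six_le {x m n p : ℕ} (h : x ^ 6 ≤ 2 ^ 48 * m ^ 6 * n ^ 10 * p ^ 8) :
    (x : ℝ) ≤ 2 ^ 8 * m * (n : ℝ) ^ ((5 : ℝ) / 3) * (p : ℝ) ^ ((4 : ℝ) / 3) := by
  have hrpow : ∀ (y : ℕ) (e : ℕ) (a : ℝ), a * 6 = e → ((y : ℝ) ^ a) ^ 6 = (y : ℝ) ^ e := by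
    intro y e a ha
    rw [← Real.rpow_natCast, ← Real.rpow_mul (Nat.cast_nonneg y), ← Real.rpow_natCast]
    norm_num [ha]
  refine (pow_le_pow_iff_left₀ (Nat.cast_nonneg x) (by positivity) (by norm_num : 6 ≠ 0)).1 ?_
  rw [mul_pow, mul_pow, mul_pow, hrpow n 10 _ (by norm_num), hrpow p 8 _ (by norm_num)]
  exact_mod_cast h.trans_eq (by ring)

section CollinearTriples

variable (A₁ A₂ A₃ : Finset ℝ)

noncomputable def collinearTriples : Finset ((ℝ × ℝ) × (ℝ × ℝ) × (ℝ × ℝ)) :=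
  {t ∈ (A₁ ×ˢ A₁) ×ˢ (A₂ ×ˢ A₂) ×ˢ (A₃ ×ˢ A₃) |
    t.1 ≠ t.2.1 ∧ t.1 ≠ t.2.2 ∧ t.2.1 ≠ t.2.2 ∧ Collinear ℝ {t.1, t.2.1, t.2.2}}

noncomputable def tripleLines : Finset (AffineSubspace ℝ (ℝ × ℝ)) :=
  (collinearTriples A₁ A₂ A₃).image fun t ↦ line[ℝ, t.1, t.2.1]

theorem To_eq_card_collinearTriples : To A₁ A₂ A₃ = #(collinearTriples A₁ A₂ A₃) := by
  rw [To, ← Set.ncard_coe_finset]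
  congr 1
  ext t
  simp only [collinearTriples, coe_filter, mem_product, Set.mem_ofPred_eq, Set.mem_prod, mem_coe]
  tauto

variable {A₁ A₂ A₃}

theorem third_mem_of_mem_collinearTriples {t : (ℝ × ℝ) × (ℝ × ℝ) × (ℝ × ℝ)}
    (ht : t ∈ collinearTriples A₁ A₂ A₃) : t.2.2 ∈ line[ℝ, t.1, t.2.1] := by
  obtain ⟨-, h₁₂, -, -, hcol⟩ := mem_filter.1 ht
  exact hcol.mem_affineSpan_of_mem_of_ne (by simp) (by simp) (by simp) h₁₂

theorem exists_of_mem_tripleLines {ℓ : AffineSubspace ℝ (ℝ × ℝ)}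
    (hℓ : ℓ ∈ tripleLines A₁ A₂ A₃) :
    Collinear ℝ (ℓ : Set (ℝ × ℝ)) ∧
      (∃ u ∈ A₁ ×ˢ A₁, ∃ v ∈ A₂ ×ˢ A₂, u ≠ v ∧ u ∈ ℓ ∧ v ∈ ℓ) ∧ ∃ w ∈ A₃ ×ˢ A₃, w ∈ ℓ := by
  obtain ⟨t, ht, rfl⟩ := mem_image.1 hℓ
  obtain ⟨hgrid, h₁₂, -⟩ := mem_filter.1 ht
  obtain ⟨h₁, h₂, h₃⟩ := mem_product.1 hgrid |>.imp_right mem_product.1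
  exact ⟨collinear_affineSpan_pair _ _, ⟨t.1, h₁, t.2.1, h₂, h₁₂, left_mem_affineSpan_pair _ _ _,
    right_mem_affineSpan_pair _ _ _⟩, t.2.2, h₃, third_mem_of_mem_collinearTriples ht⟩

theorem card_collinearTriples_le :
    #(collinearTriples A₁ A₂ A₃) ≤ ∑ ℓ ∈ tripleLines A₁ A₂ A₃,
      #{p ∈ A₁ ×ˢ A₁ | p ∈ ℓ} * #{p ∈ A₂ ×ˢ A₂ | p ∈ ℓ} * #{p ∈ A₃ ×ˢ A₃ | p ∈ ℓ} := by
  calc #(collinearTriples A₁ A₂ A₃)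
      ≤ #((tripleLines A₁ A₂ A₃).biUnion fun ℓ ↦
          {p ∈ A₁ ×ˢ A₁ | p ∈ ℓ} ×ˢ {p ∈ A₂ ×ˢ A₂ | p ∈ ℓ} ×ˢ {p ∈ A₃ ×ˢ A₃ | p ∈ ℓ}) := by
        refine card_le_card fun t ht ↦ mem_biUnion.2 ⟨_, mem_image_of_mem _ ht, ?_⟩
        obtain ⟨h₁, h₂, h₃⟩ := mem_product.1 (mem_filter.1 ht).1 |>.imp_right mem_product.1
        exact mem_product.2 ⟨mem_filter.2 ⟨h₁, left_mem_affineSpan_pair _ _ _⟩,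
          mem_product.2 ⟨mem_filter.2 ⟨h₂, right_mem_affineSpan_pair _ _ _⟩,
            mem_filter.2 ⟨h₃, third_mem_of_mem_collinearTriples ht⟩⟩⟩
    _ ≤ _ := card_biUnion_le.trans_eq
        (sum_congr rfl fun ℓ _ ↦ by rw [card_product, card_product, mul_assoc])

end CollinearTriples

theorem pow_six_le_of_dyadic_class {A₁ A₂ A₃ : Finset ℝ} (h₁₂ : #A₁ ≤ #A₂) (h₂₃ : #A₂ ≤ #A₃)
    (t : ℕ × ℕ × ℕ) :
    (2 ^ t.1 * 2 ^ t.2.1 * 2 ^ t.2.2 * #{ℓ ∈ tripleLines A₁ A₂ A₃ |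
      (Nat.log 2 #{p ∈ A₁ ×ˢ A₁ | p ∈ ℓ}, Nat.log 2 #{p ∈ A₂ ×ˢ A₂ | p ∈ ℓ},
        Nat.log 2 #{p ∈ A₃ ×ˢ A₃ | p ∈ ℓ}) = t}) ^ 6 ≤
      2 ^ 48 * #A₁ ^ 6 * #A₂ ^ 10 * #A₃ ^ 8 := by
  set F := {ℓ ∈ tripleLines A₁ A₂ A₃ | (Nat.log 2 #{p ∈ A₁ ×ˢ A₁ | p ∈ ℓ},
    Nat.log 2 #{p ∈ A₂ ×ˢ A₂ | p ∈ ℓ}, Nat.log 2 #{p ∈ A₃ ×ˢ A₃ | p ∈ ℓ}) = t}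
  have hF : ∀ ℓ ∈ F, Collinear ℝ (ℓ : Set (ℝ × ℝ)) := fun ℓ hℓ ↦
    (exists_of_mem_tripleLines (mem_filter.1 hℓ).1).1
  have hpair : ∀ ℓ ∈ F, ∃ u ∈ A₁ ×ˢ A₁, ∃ v ∈ A₂ ×ˢ A₂, u ≠ v ∧ u ∈ ℓ ∧ v ∈ ℓ := fun ℓ hℓ ↦
    (exists_of_mem_tripleLines (mem_filter.1 hℓ).1).2.1
  have hdyadic : ∀ {G : Finset (ℝ × ℝ)} {ℓ : AffineSubspace ℝ (ℝ × ℝ)} {e : ℕ},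
      (∃ w ∈ G, w ∈ ℓ) → Nat.log 2 #{p ∈ G | p ∈ ℓ} = e → 2 ^ e ≤ #{p ∈ G | p ∈ ℓ} :=
    fun ⟨w, hw, hwℓ⟩ he ↦ he ▸ Nat.pow_log_le_self 2 (card_pos.2 ⟨w, mem_filter.2 ⟨hw, hwℓ⟩⟩).ne'
  have hα : ∀ ℓ ∈ F, 2 ^ t.1 ≤ #{p ∈ A₁ ×ˢ A₁ | p ∈ ℓ} := fun ℓ hℓ ↦ by
    obtain ⟨hℓL, rfl⟩ := mem_filter.1 hℓ
    obtain ⟨-, ⟨u, hu, -, -, -, huℓ, -⟩, -⟩ := exists_of_mem_tripleLines hℓL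
    exact hdyadic ⟨u, hu, huℓ⟩ rfl
  have hβ : ∀ ℓ ∈ F, 2 ^ t.2.1 ≤ #{p ∈ A₂ ×ˢ A₂ | p ∈ ℓ} := fun ℓ hℓ ↦ by
    obtain ⟨hℓL, rfl⟩ := mem_filter.1 hℓ
    obtain ⟨-, ⟨-, -, v, hv, -, -, hvℓ⟩, -⟩ := exists_of_mem_tripleLines hℓL
    exact hdyadic ⟨v, hv, hvℓ⟩ rfl
  have hγ : ∀ ℓ ∈ F, 2 ^ t.2.2 ≤ #{p ∈ A₃ ×ˢ A₃ | p ∈ ℓ} := fun ℓ hℓ ↦ by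
    obtain ⟨hℓL, rfl⟩ := mem_filter.1 hℓ
    exact hdyadic (exists_of_mem_tripleLines hℓL).2.2 rfl
  have hpairs : 2 ^ t.1 * 2 ^ t.2.1 * #F ≤ 2 * (#A₁ ^ 2 * #A₂ ^ 2) :=
    calc 2 ^ t.1 * 2 ^ t.2.1 * #F = #F • (2 ^ t.1 * 2 ^ t.2.1) := by rw [smul_eq_mul, mul_comm]
      _ ≤ ∑ ℓ ∈ F, #{p ∈ A₁ ×ˢ A₁ | p ∈ ℓ} * #{p ∈ A₂ ×ˢ A₂ | p ∈ ℓ} :=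
        card_nsmul_le_sum _ _ _ fun ℓ hℓ ↦ Nat.mul_le_mul (hα ℓ hℓ) (hβ ℓ hℓ)
      _ ≤ 2 * (#(A₁ ×ˢ A₁) * #(A₂ ×ˢ A₂)) := sum_card_mul_card_le hF _ _ hpair
      _ = 2 * (#A₁ ^ 2 * #A₂ ^ 2) := by rw [card_product, card_product, sq, sq]
  exact pow_six_le_of_incidence_bounds h₁₂ h₂₃ (Nat.two_pow_pos _) (Nat.two_pow_pos _)
    (Nat.two_pow_pos _) hpairs (szemeredi_trotter_grid hF · hα) (szemeredi_trotter_grid hF · hβ)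
    (szemeredi_trotter_grid hF · hγ)

theorem sum_tripleLines_le {A₁ A₂ A₃ : Finset ℝ} (h₁₂ : #A₁ ≤ #A₂) (h₂₃ : #A₂ ≤ #A₃) :
    ((∑ ℓ ∈ tripleLines A₁ A₂ A₃, #{p ∈ A₁ ×ˢ A₁ | p ∈ ℓ} * #{p ∈ A₂ ×ˢ A₂ | p ∈ ℓ} *
        #{p ∈ A₃ ×ˢ A₃ | p ∈ ℓ} : ℕ) : ℝ) ≤
      ((Nat.log 2 #A₁ + 1) * (Nat.log 2 #A₂ + 1) * (Nat.log 2 #A₃ + 1) : ℕ) *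
        (2 ^ 11 * #A₁ * (#A₂ : ℝ) ^ ((5 : ℝ) / 3) * (#A₃ : ℝ) ^ ((4 : ℝ) / 3)) := by
  have hL : ∀ ℓ ∈ tripleLines A₁ A₂ A₃, Collinear ℝ (ℓ : Set (ℝ × ℝ)) := fun ℓ hℓ ↦
    (exists_of_mem_tripleLines hℓ).1
  have hdyadic := sum_mul_mul_le_sum_dyadic (tripleLines A₁ A₂ A₃)
    (fun ℓ ↦ #{p ∈ A₁ ×ˢ A₁ | p ∈ ℓ}) (fun ℓ ↦ #{p ∈ A₂ ×ˢ A₂ | p ∈ ℓ})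
    (fun ℓ ↦ #{p ∈ A₃ ×ˢ A₃ | p ∈ ℓ}) (fun ℓ hℓ ↦ card_filter_mem_grid_le (hL ℓ hℓ) A₁)
    (fun ℓ hℓ ↦ card_filter_mem_grid_le (hL ℓ hℓ) A₂)
    (fun ℓ hℓ ↦ card_filter_mem_grid_le (hL ℓ hℓ) A₃)
  refine (Nat.cast_le.2 hdyadic).trans ?_
  push_cast
  refine (sum_le_card_nsmul _ _
    (2 ^ 11 * #A₁ * (#A₂ : ℝ) ^ ((5 : ℝ) / 3) * (#A₃ : ℝ) ^ ((4 : ℝ) / 3)) fun t _ ↦ ?_).trans_eq ?_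
  · have := cast_le_of_pow_six_le (pow_six_le_of_dyadic_class h₁₂ h₂₃ t)
    push_cast at this
    linarith
  · rw [nsmul_eq_mul, card_product, card_product, card_range, card_range, card_range]
    push_cast
    ring

theorem collinear_triples_asymmetric_bound :
    ∃ C c : ℝ, 0 < C ∧ 0 ≤ c ∧
      ∀ A₁ A₂ A₃ : Finset ℝ, A₁.card ≤ A₂.card → A₂.card ≤ A₃.card →
        (To A₁ A₂ A₃ : ℝ) ≤
          C * (A₁.card : ℝ) * (A₂.card : ℝ) ^ ((5 : ℝ) / 3) *
            (A₃.card : ℝ) ^ ((4 : ℝ) / 3) * Real.log (2 + (A₃.card : ℝ)) ^ c := by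
  refine ⟨27 * 2 ^ 11, 3, by norm_num, by norm_num, fun A₁ A₂ A₃ h₁₂ h₂₃ ↦ ?_⟩
  rw [To_eq_card_collinearTriples, Real.rpow_ofNat]
  calc (#(collinearTriples A₁ A₂ A₃) : ℝ)
      ≤ ((∑ ℓ ∈ tripleLines A₁ A₂ A₃, #{p ∈ A₁ ×ˢ A₁ | p ∈ ℓ} * #{p ∈ A₂ ×ˢ A₂ | p ∈ ℓ} *
          #{p ∈ A₃ ×ˢ A₃ | p ∈ ℓ} : ℕ) : ℝ) := by exact_mod_cast card_collinearTriples_le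
    _ ≤ _ := sum_tripleLines_le h₁₂ h₂₃
    _ ≤ 27 * Real.log (2 + #A₃) ^ 3 *
          (2 ^ 11 * #A₁ * (#A₂ : ℝ) ^ ((5 : ℝ) / 3) * (#A₃ : ℝ) ^ ((4 : ℝ) / 3)) := by
        gcongr
        exact cast_prod_natLog_add_one_le (h₁₂.trans h₂₃) h₂₃
    _ = _ := by ring
end

section
/- Let A be a finite subset of ℝ with 0 ∉ A. Then T°({0}, A, A) ≥ E^×(A) − |A|², where E^×(A) = #{(a₁,a₂,a₃,a₄) ∈ A⁴ : a₁a₂ = a₃a₄}. -/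
open Finset

/-- Multiplicative energy: the number of quadruples `(a₁,a₂,a₃,a₄) ∈ A⁴` with `a₁a₂ = a₃a₄`. -/
noncomputable def Emul (A : Finset ℝ) : ℕ :=
  (((A ×ˢ A) ×ˢ (A ×ˢ A)).filter (fun p => p.1.1 * p.1.2 = p.2.1 * p.2.2)).card

/-!
A nontrivial solution of `a * b = c * d` with `(a, b) ≠ (c, d)` gives two distinct points
`(a, d)` and `(c, b)` of `A × A`, both on the line through the origin with slope `d / a = b / c`.
Together with the origin they form a collinear triple counted by `T°({0}, A, A)`, and this map is
injective. The trivial solutions `(a, b) = (c, d)` number exactly `|A|²`.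
-/

theorem collinear_zero_of_mul_eq_mul {k : Type*} [Field k] {u v : k × k} (hu : u.1 ≠ 0)
    (h : u.1 * v.2 = u.2 * v.1) : Collinear k {0, u, v} := by
  rw [Set.pair_comm, Set.insert_comm]
  refine collinear_insert_of_mem_affineSpan_pair ?_
  have hv : AffineMap.lineMap 0 u (v.1 / u.1) = v := by
    ext
    · simp [AffineMap.lineMap_apply_module', hu]
    · simp only [AffineMap.lineMap_apply_module', sub_zero, add_zero, Prod.smul_snd, smul_eq_mul]
      field_simp
      linear_combination -h
  exact hv ▸ AffineMap.lineMap_mem_affineSpan_pair _ _ _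

theorem Emul_eq_sq_add_card_offDiag (A : Finset ℝ) :
    Emul A = #A ^ 2 + #((A ×ˢ A).offDiag.filter fun p => p.1.1 * p.1.2 = p.2.1 * p.2.2) := by
  classical
  rw [Emul, ← diag_union_offDiag, filter_union,
    card_union_of_disjoint (disjoint_filter_filter (disjoint_diag_offDiag _)),
    filter_true_of_mem, diag_card, card_product, sq]
  intro p hp
  rw [(mem_diag.1 hp).2]

theorem card_offDiag_mul_eq_le_To (A : Finset ℝ) (hA : (0 : ℝ) ∉ A) :
    #((A ×ˢ A).offDiag.filter fun p => p.1.1 * p.1.2 = p.2.1 * p.2.2) ≤ To {0} A A := by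
  rw [To, ← Set.ncard_coe_finset]
  refine Set.ncard_le_ncard_of_injOn (fun q => (0, (q.1.1, q.2.2), (q.2.1, q.1.2))) ?_ ?_ ?_
  · intro q hq
    simp only [coe_filter, mem_offDiag, mem_product, Set.mem_ofPred_eq] at hq
    obtain ⟨⟨⟨ha, hb⟩, ⟨hc, hd⟩, hne⟩, heq⟩ := hq
    have ha0 : q.1.1 ≠ 0 := fun h => hA (h ▸ ha)
    have hc0 : q.2.1 ≠ 0 := fun h => hA (h ▸ hc)
    refine ⟨by simp [Prod.zero_eq_mk], ⟨ha, hd⟩, ⟨hc, hb⟩, ?_, ?_, ?_,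
      collinear_zero_of_mul_eq_mul ha0 ?_⟩
    · simp [Prod.ext_iff, ha0.symm]
    · simp [Prod.ext_iff, hc0.symm]
    · intro h
      simp only [Prod.mk.injEq] at h
      exact hne (Prod.ext h.1 h.2.symm)
    · linear_combination heq
  · intro q _ r _ h
    simp only [Prod.mk.injEq] at h
    ext <;> simp [h]
  · have hbox : (((({0} : Finset ℝ) : Set ℝ) ×ˢ (({0} : Finset ℝ) : Set ℝ)) ×ˢ
        (((A : Set ℝ) ×ˢ (A : Set ℝ)) ×ˢ ((A : Set ℝ) ×ˢ (A : Set ℝ)))).Finite := Set.toFinite _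
    exact hbox.subset fun p hp => ⟨hp.1, hp.2.1, hp.2.2.1⟩

theorem To_zero_lower_bound (A : Finset ℝ) (hA : (0 : ℝ) ∉ A) :
    (Emul A : ℝ) - (A.card : ℝ) ^ 2 ≤ (To {0} A A : ℝ) := by
  have h := card_offDiag_mul_eq_le_To A hA
  rw [← Nat.cast_le (α := ℝ)] at h
  rw [Emul_eq_sq_add_card_offDiag, Nat.cast_add, Nat.cast_pow]
  linarith
end

section
/- Let A₁, A₂, A₃ be finite subsets of ℝ with |A₁| ≤ |A₂| ≤ |A₃|. Let ℒ be the set of lines l in ℝ² such that l contains three pairwise distinct points u₁, u₂, u₃ with uᵢ ∈ Aᵢ × Aᵢ (i = 1,2,3), and for l ∈ ℒ and i = 1,2,3 set α_{i,l} = |l ∩ (Aᵢ × Aᵢ)|. Then for each i ∈ {1,2,3} and each real p with 1 ≤ p ≤ 3, there exist absolute constants C > 0 and c ≥ 0 such that ∑_{l ∈ ℒ, α_{i,l} ≥ 2} α_{i,l}^p ≤ C·|A₁|^{3−p}·|Aᵢ|^{p+1}·(log(2+|A₃|))^c. -/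
/-!
Every line of `ℒ` passes through a point of `A₁ × A₁`, and the lines through a fixed point `q`
meet `Aᵢ × Aᵢ` in sets that are disjoint away from `q`; as each line carries `α ≥ 2` points, the
first moment `∑ α_{i,l}` is at most `2 |A₁|² |Aᵢ|²`. For the third moment, cutting the grid
`Aᵢ × Aᵢ` into cells of consecutive coordinates gives the Szemerédi–Trotter bound
`k ∑_{α ≥ k} α² = O(|Aᵢ|⁴)`, and summing it over all thresholds `k` yields
`∑ α_{i,l}³ = O(|Aᵢ|⁴ log |Aᵢ|)`. Hölder's inequality interpolates between the two moments.
-/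

open Finset

/-- A line in the plane: the affine span of two distinct points. -/
def IsLine (l : Set (ℝ × ℝ)) : Prop :=
  ∃ u v : ℝ × ℝ, u ≠ v ∧ l = (affineSpan ℝ {u, v} : Set (ℝ × ℝ))

/-- The family `ℒ` of lines containing three pairwise distinct points `u₁, u₂, u₃`
with `uᵢ ∈ Aᵢ × Aᵢ` for `i = 1, 2, 3`. -/
def lineFamily (A₁ A₂ A₃ : Finset ℝ) : Set (Set (ℝ × ℝ)) :=
  {l | IsLine l ∧ ∃ u₁ u₂ u₃ : ℝ × ℝ,
    u₁ ∈ (A₁ : Set ℝ) ×ˢ (A₁ : Set ℝ) ∧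
    u₂ ∈ (A₂ : Set ℝ) ×ˢ (A₂ : Set ℝ) ∧
    u₃ ∈ (A₃ : Set ℝ) ×ˢ (A₃ : Set ℝ) ∧
    u₁ ≠ u₂ ∧ u₁ ≠ u₃ ∧ u₂ ≠ u₃ ∧ u₁ ∈ l ∧ u₂ ∈ l ∧ u₃ ∈ l}

/-- `alphaCnt A l = |l ∩ (A × A)|`. -/
noncomputable def alphaCnt (A : Finset ℝ) (l : Set (ℝ × ℝ)) : ℕ :=
  (l ∩ (A : Set ℝ) ×ˢ (A : Set ℝ)).ncard

open scoped Classical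

lemma isLine_affineSpan_pair {u v : ℝ × ℝ} (h : u ≠ v) : IsLine (line[ℝ, u, v] : Set (ℝ × ℝ)) :=
  ⟨u, v, h, rfl⟩

lemma IsLine.eq_of_mem {l m : Set (ℝ × ℝ)} (hl : IsLine l) (hm : IsLine m) {u v : ℝ × ℝ}
    (huv : u ≠ v) (hul : u ∈ l) (hvl : v ∈ l) (hum : u ∈ m) (hvm : v ∈ m) : l = m := by
  obtain ⟨a, b, -, rfl⟩ := hl
  obtain ⟨c, d, -, rfl⟩ := hm
  rw [← affineSpan_pair_eq_of_mem_of_mem_of_ne hul hvl huv,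
    affineSpan_pair_eq_of_mem_of_mem_of_ne hum hvm huv]

lemma IsLine.exists_smul_eq_sub {l : Set (ℝ × ℝ)} (hl : IsLine l) :
    ∃ d : ℝ × ℝ, ∀ p ∈ l, ∀ q ∈ l, ∃ c : ℝ, c • d = p - q := by
  obtain ⟨u, v, -, rfl⟩ := hl
  refine ⟨u - v, fun p hp q hq => ?_⟩
  have := AffineSubspace.vsub_mem_direction hp hq
  rwa [direction_affineSpan, vectorSpan_pair, Submodule.mem_span_singleton] at this

/-- On a line with direction `d`, `(x - x') * (y - y') = c² d₁ d₂`. -/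
lemma IsLine.mul_sub_nonneg_or_nonpos {l : Set (ℝ × ℝ)} (hl : IsLine l) :
    (∀ p ∈ l, ∀ q ∈ l, 0 ≤ (p.1 - q.1) * (p.2 - q.2)) ∨
      ∀ p ∈ l, ∀ q ∈ l, (p.1 - q.1) * (p.2 - q.2) ≤ 0 := by
  obtain ⟨d, hd⟩ := hl.exists_smul_eq_sub
  have key : ∀ p ∈ l, ∀ q ∈ l, ∃ c : ℝ, (p.1 - q.1) * (p.2 - q.2) = c ^ 2 * (d.1 * d.2) := by
    intro p hp q hq
    obtain ⟨c, hc⟩ := hd p hp q hq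
    refine ⟨c, ?_⟩
    rw [← Prod.fst_sub, ← Prod.snd_sub, ← hc, Prod.smul_fst, Prod.smul_snd, smul_eq_mul,
      smul_eq_mul]
    ring
  rcases le_total 0 (d.1 * d.2) with h | h
  · left
    intro p hp q hq
    obtain ⟨c, hc⟩ := key p hp q hq
    rw [hc]; positivity
  · right
    intro p hp q hq
    obtain ⟨c, hc⟩ := key p hp q hq
    rw [hc]; exact mul_nonpos_of_nonneg_of_nonpos (sq_nonneg c) h

noncomputable def pointCount (P : Finset (ℝ × ℝ)) (l : Set (ℝ × ℝ)) : ℕ :=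
  #{p ∈ P | p ∈ l}

lemma pointCount_le_card (P : Finset (ℝ × ℝ)) (l : Set (ℝ × ℝ)) : pointCount P l ≤ #P :=
  card_filter_le _ _

lemma alphaCnt_eq_pointCount (A : Finset ℝ) (l : Set (ℝ × ℝ)) :
    alphaCnt A l = pointCount (A ×ˢ A) l := by
  rw [alphaCnt, pointCount, ← Set.ncard_coe_finset, coe_filter]
  congr 1
  ext p
  simp [and_comm]

lemma finite_setOf_isLine_two_le_pointCount (P : Finset (ℝ × ℝ)) :
    {l | IsLine l ∧ 2 ≤ pointCount P l}.Finite := by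
  refine (P.offDiag.finite_toSet.image fun x => (line[ℝ, x.1, x.2] : Set (ℝ × ℝ))).subset ?_
  rintro l ⟨hl, h2⟩
  obtain ⟨u, hu, v, hv, huv⟩ := one_lt_card.1 h2
  rw [mem_filter] at hu hv
  exact ⟨(u, v), mem_offDiag.2 ⟨hu.1, hv.1, huv⟩,
    (hl.eq_of_mem (isLine_affineSpan_pair huv) huv hu.2 hv.2
      (left_mem_affineSpan_pair _ _ _) (right_mem_affineSpan_pair _ _ _)).symm⟩

lemma exists_finset_coe_eq_lineFamily (A₁ A₂ A₃ B : Finset ℝ) :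
    ∃ Λ : Finset (Set (ℝ × ℝ)), ↑Λ = {l ∈ lineFamily A₁ A₂ A₃ | 2 ≤ alphaCnt B l} ∧
      ∀ l ∈ Λ, IsLine l ∧ 2 ≤ pointCount (B ×ˢ B) l ∧ ∃ q ∈ A₁ ×ˢ A₁, q ∈ l := by
  have hsub : {l ∈ lineFamily A₁ A₂ A₃ | 2 ≤ alphaCnt B l} ⊆
      {l | IsLine l ∧ 2 ≤ pointCount (B ×ˢ B) l} := fun l hl =>
    ⟨hl.1.1, alphaCnt_eq_pointCount B l ▸ hl.2⟩
  obtain ⟨Λ, hΛ⟩ := ((finite_setOf_isLine_two_le_pointCount _).subset hsub).exists_finset_coe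
  refine ⟨Λ, hΛ, fun l hl => ?_⟩
  rw [← mem_coe, hΛ] at hl
  obtain ⟨⟨hline, u, -, -, hu, -, -, -, -, -, hul, -, -⟩, h2⟩ := hl
  exact ⟨hline, alphaCnt_eq_pointCount B l ▸ h2, u, mem_product.2 hu, hul⟩

lemma Finset.sum_card_filter_le_card {α β : Type*} (D : Finset α) (Λ : Finset β)
    (r : α → β → Prop) [∀ x l, Decidable (r x l)] (h : ∀ x ∈ D, #{l ∈ Λ | r x l} ≤ 1) :
    ∑ l ∈ Λ, #{x ∈ D | r x l} ≤ #D := by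
  have := sum_card_bipartiteAbove_eq_sum_card_bipartiteBelow (s := D) (t := Λ) r
  simp only [bipartiteAbove, bipartiteBelow] at this
  rw [← this]
  simpa using sum_le_card_nsmul D _ 1 h

section Incidences

variable {Λ : Finset (Set (ℝ × ℝ))}

lemma sum_card_filter_mem_mem_le_card (hΛ : ∀ l ∈ Λ, IsLine l)
    (D : Finset ((ℝ × ℝ) × (ℝ × ℝ))) (hD : ∀ x ∈ D, x.1 ≠ x.2) :
    ∑ l ∈ Λ, #{x ∈ D | x.1 ∈ l ∧ x.2 ∈ l} ≤ #D :=
  D.sum_card_filter_le_card Λ _ fun x hx => card_le_one.2 fun l hl m hm => by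
    rw [mem_filter] at hl hm
    exact (hΛ l hl.1).eq_of_mem (hΛ m hm.1) (hD x hx) hl.2.1 hl.2.2 hm.2.1 hm.2.2

lemma sum_pointCount_mul_pred_le (hΛ : ∀ l ∈ Λ, IsLine l) (P : Finset (ℝ × ℝ)) :
    ∑ l ∈ Λ, pointCount P l * (pointCount P l - 1) ≤ #P * (#P - 1) := by
  have hoff : ∀ S : Finset (ℝ × ℝ), #S * (#S - 1) = #S.offDiag := fun S => by
    rw [offDiag_card, Nat.mul_sub_one]
  have hline : ∀ l : Set (ℝ × ℝ),
      {x ∈ P.offDiag | x.1 ∈ l ∧ x.2 ∈ l} = {p ∈ P | p ∈ l}.offDiag := fun l => by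
    ext x; simp only [mem_filter, mem_offDiag]; tauto
  simp only [pointCount, hoff, ← hline]
  exact sum_card_filter_mem_mem_le_card hΛ _ fun x hx => (mem_offDiag.1 hx).2.2

/-- Lines through a common point `q` are disjoint away from `q`. -/
lemma sum_pointCount_sub_one_le (hΛ : ∀ l ∈ Λ, IsLine l) {q : ℝ × ℝ} (hq : ∀ l ∈ Λ, q ∈ l)
    (P : Finset (ℝ × ℝ)) : ∑ l ∈ Λ, (pointCount P l - 1) ≤ #P := by
  calc ∑ l ∈ Λ, (pointCount P l - 1) ≤ ∑ l ∈ Λ, #{x ∈ P.erase q | x ∈ l} := by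
        refine sum_le_sum fun l _ => ?_
        rw [pointCount, filter_erase]
        exact pred_card_le_card_erase
    _ ≤ #(P.erase q) := (P.erase q).sum_card_filter_le_card Λ _ fun x hx =>
        card_le_one.2 fun l hl m hm => by
          rw [mem_filter] at hl hm
          exact (hΛ l hl.1).eq_of_mem (hΛ m hm.1) (ne_of_mem_erase hx) hl.2 (hq l hl.1) hm.2
            (hq m hm.1)
    _ ≤ #P := card_erase_le

lemma sum_pointCount_le (hΛ : ∀ l ∈ Λ, IsLine l) (Q P : Finset (ℝ × ℝ))
    (hQ : ∀ l ∈ Λ, ∃ q ∈ Q, q ∈ l) (hP : ∀ l ∈ Λ, 2 ≤ pointCount P l) :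
    ∑ l ∈ Λ, pointCount P l ≤ 2 * #Q * #P := by
  calc ∑ l ∈ Λ, pointCount P l ≤ ∑ l ∈ Λ, ∑ q ∈ Q, if q ∈ l then pointCount P l else 0 := by
        refine sum_le_sum fun l hl => ?_
        obtain ⟨q, hq, hql⟩ := hQ l hl
        exact single_le_sum (f := fun q => if q ∈ l then pointCount P l else 0)
          (fun _ _ => Nat.zero_le _) hq |>.trans' (by simp [hql])
    _ = ∑ q ∈ Q, ∑ l ∈ Λ with q ∈ l, pointCount P l := by
        rw [sum_comm]; simp only [sum_filter]
    _ ≤ ∑ q ∈ Q, 2 * #P := sum_le_sum fun q _ => by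
        calc ∑ l ∈ Λ with q ∈ l, pointCount P l
            ≤ ∑ l ∈ Λ with q ∈ l, 2 * (pointCount P l - 1) :=
              sum_le_sum fun l hl => by have := hP l (mem_filter.1 hl).1; omega
          _ ≤ 2 * #P := by
              rw [← mul_sum]
              exact Nat.mul_le_mul_left _ <| sum_pointCount_sub_one_le
                (fun l hl => hΛ l (mem_filter.1 hl).1) (fun l hl => (mem_filter.1 hl).2) P
    _ = 2 * #Q * #P := by rw [sum_const, smul_eq_mul]; ring

/-- `A` is cut into blocks of `s` consecutive elements; `blockIdx s A x` is the block of `x`. -/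
noncomputable def blockIdx (s : ℕ) (A : Finset ℝ) (x : ℝ) : ℕ :=
  #{a ∈ A | a < x} / s

lemma filter_lt_subset_filter_lt (A : Finset ℝ) {x y : ℝ} (hxy : x ≤ y) :
    {a ∈ A | a < x} ⊆ {a ∈ A | a < y} := fun a ha => by
  rw [mem_filter] at ha ⊢
  exact ⟨ha.1, ha.2.trans_le hxy⟩

lemma blockIdx_monotone (s : ℕ) (A : Finset ℝ) : Monotone (blockIdx s A) := fun _ _ hxy =>
  Nat.div_le_div_right <| card_le_card <| filter_lt_subset_filter_lt A hxy

lemma blockIdx_lt {s r : ℕ} {A : Finset ℝ} (hA : #A ≤ s * r) {a : ℝ} (ha : a ∈ A) :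
    blockIdx s A a < r :=
  Nat.div_lt_of_lt_mul <|
    (card_lt_card <| filter_ssubset (p := (· < a)).2 ⟨a, ha, lt_irrefl a⟩).trans_le hA

lemma card_filter_blockIdx_eq_le {s : ℕ} (hs : 0 < s) (A : Finset ℝ) (i : ℕ) :
    #{a ∈ A | blockIdx s A a = i} ≤ s := by
  have hrank : ∀ a ∈ A, ∀ b, a < b → #{x ∈ A | x < a} < #{x ∈ A | x < b} := fun a ha b hab =>
    card_lt_card <| (ssubset_iff_of_subset <| filter_lt_subset_filter_lt A hab.le).2
      ⟨a, mem_filter.2 ⟨ha, hab⟩, fun h => lt_irrefl a (mem_filter.1 h).2⟩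
  calc #{a ∈ A | blockIdx s A a = i} ≤ #(Ico (i * s) (i * s + s)) := by
        refine card_le_card_of_injOn (fun a => #{x ∈ A | x < a}) (fun a ha => ?_) ?_
        · have := (Nat.div_eq_iff hs).1 (mem_filter.1 ha).2
          simp only [coe_Ico, Set.mem_Ico]
          omega
        · intro a ha b hb hab
          have ha' := (mem_filter.1 ha).1
          have hb' := (mem_filter.1 hb).1
          by_contra hne
          rcases lt_or_gt_of_ne hne with h | h
          · exact (hrank a ha' b h).ne hab
          · exact (hrank b hb' a h).ne hab.symm
    _ = s := by simp

/-- The cells met by a line form a chain for the product order on `ℕ × ℕ`, or for the order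
reversing the second coordinate; on it `c.1 + c.2`, resp. `c.1 - c.2`, is injective. -/
lemma card_image_le_of_isLine {l : Set (ℝ × ℝ)} (hl : IsLine l) {P : Finset (ℝ × ℝ)}
    (hP : ∀ p ∈ P, p ∈ l) {f g : ℝ → ℕ} (hf : Monotone f) (hg : Monotone g) {a b : ℕ}
    (hfa : ∀ p ∈ P, f p.1 < a) (hgb : ∀ p ∈ P, g p.2 < b) :
    #(P.image fun p => (f p.1, g p.2)) ≤ a + b := by
  have key : ∀ κ : ℕ × ℕ → ℕ, (∀ p ∈ P, κ (f p.1, g p.2) < a + b) →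
      (∀ p ∈ P, ∀ q ∈ P, κ (f p.1, g p.2) = κ (f q.1, g q.2) → f p.1 = f q.1 ∧ g p.2 = g q.2) →
      #(P.image fun p => (f p.1, g p.2)) ≤ a + b := fun κ hmaps hinj =>
    calc #(P.image fun p => (f p.1, g p.2)) ≤ #(range (a + b)) := by
          refine card_le_card_of_injOn κ ?_ ?_
          · simp only [Set.MapsTo, coe_image, Set.forall_mem_image, coe_range, Set.mem_Iio]
            exact hmaps
          · simp only [Set.InjOn, coe_image, Set.forall_mem_image, Prod.ext_iff]
            exact hinj
      _ = a + b := card_range _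
  rcases hl.mul_sub_nonneg_or_nonpos with h | h
  · refine key (fun c => c.1 + c.2) (fun p hp => by linarith [hfa p hp, hgb p hp])
      fun p hp q hq hpq => ?_
    rcases mul_nonneg_iff.1 (h p (hP p hp) q (hP q hq)) with ⟨h1, h2⟩ | ⟨h1, h2⟩
    · have := hf (sub_nonneg.1 h1); have := hg (sub_nonneg.1 h2); omega
    · have := hf (sub_nonpos.1 h1); have := hg (sub_nonpos.1 h2); omega
  · refine key (fun c => c.1 + (b - c.2)) (fun p hp => by have := hfa p hp; omega)
      fun p hp q hq hpq => ?_
    have := hgb p hp; have := hgb q hq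
    rcases mul_nonpos_iff.1 (h p (hP p hp) q (hP q hq)) with ⟨h1, h2⟩ | ⟨h1, h2⟩
    · have := hf (sub_nonneg.1 h1); have := hg (sub_nonpos.1 h2); omega
    · have := hf (sub_nonpos.1 h1); have := hg (sub_nonneg.1 h2); omega

lemma sq_card_le_card_image_mul {α β : Type*} [DecidableEq α] [DecidableEq β] (T : Finset α)
    (φ : α → β) : #T ^ 2 ≤ #(T.image φ) * (#T + #{x ∈ T.offDiag | φ x.1 = φ x.2}) := by
  have hpairs : #{x ∈ T ×ˢ T | φ x.1 = φ x.2} = #T + #{x ∈ T.offDiag | φ x.1 = φ x.2} := by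
    rw [← diag_union_offDiag, filter_union, card_union_of_disjoint
      (disjoint_filter_filter (disjoint_diag_offDiag T)), filter_true_of_mem, diag_card]
    intro x hx
    rw [(mem_diag.1 hx).2]
  have hfib : #{x ∈ T ×ˢ T | φ x.1 = φ x.2} = ∑ c ∈ T.image φ, #{x ∈ T | φ x = c} ^ 2 := by
    rw [card_eq_sum_card_fiberwise (f := fun x => φ x.1) (t := T.image φ) fun x hx =>
      mem_image_of_mem φ (mem_product.1 (mem_filter.1 hx).1).1]
    refine sum_congr rfl fun c _ => ?_
    rw [sq, ← card_product]
    congr 1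
    ext x
    simp only [mem_filter, mem_product]
    constructor
    · rintro ⟨⟨⟨h1, h2⟩, h3⟩, h4⟩
      exact ⟨⟨h1, h4⟩, h2, h3 ▸ h4⟩
    · rintro ⟨⟨h1, h4⟩, h2, h3⟩
      exact ⟨⟨⟨h1, h2⟩, h4.trans h3.symm⟩, h4⟩
  rw [← hpairs, hfib, card_eq_sum_card_image φ T]
  exact sq_sum_le_card_mul_sum_sq

lemma card_filter_offDiag_le {α β : Type*} [DecidableEq α] [DecidableEq β] (T : Finset α)
    (φ : α → β) {K : ℕ} (hK : ∀ x ∈ T, #{y ∈ T | φ y = φ x} ≤ K) :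
    #{x ∈ T.offDiag | φ x.1 = φ x.2} ≤ #T * (K - 1) := by
  rw [card_eq_sum_card_fiberwise (f := Prod.fst) (t := T) fun x hx =>
    (mem_offDiag.1 (mem_filter.1 hx).1).1]
  refine (sum_le_sum fun x hx => ?_).trans (sum_const (K - 1) ▸ (smul_eq_mul _ _).le)
  calc #{z ∈ {x ∈ T.offDiag | φ x.1 = φ x.2} | z.1 = x}
      ≤ #({y ∈ T | φ y = φ x}.erase x) := by
        refine card_le_card_of_injOn Prod.snd (fun z hz => ?_) fun z hz w hw h => ?_
        · simp only [mem_coe, mem_filter, mem_offDiag] at hz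
          obtain ⟨⟨⟨-, h2, h12⟩, hφ⟩, rfl⟩ := hz
          exact mem_erase.2 ⟨Ne.symm h12, mem_filter.2 ⟨h2, hφ.symm⟩⟩
        · simp only [mem_coe, mem_filter] at hz hw
          exact Prod.ext (hz.2.trans hw.2.symm) h
    _ ≤ K - 1 := by
        rw [card_erase_of_mem (mem_filter.2 ⟨hx, rfl⟩ : x ∈ {y ∈ T | φ y = φ x})]
        exact Nat.sub_le_sub_right (hK x hx) 1

/-- Cut `A × B` into cells of at most `s × s` points. A line with `m ≥ 4r` points crosses at most
`2r` cells, so by Cauchy–Schwarz it carries `≥ m² / 4r` pairs of distinct points in a common cell;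
each such pair lies on one line only. -/
lemma sum_sq_pointCount_le_of_blocks (hΛ : ∀ l ∈ Λ, IsLine l) (A B : Finset ℝ) {r s : ℕ}
    (hs : 0 < s) (hA : #A ≤ s * r) (hB : #B ≤ s * r) :
    ∑ l ∈ Λ with 4 * r ≤ pointCount (A ×ˢ B) l, pointCount (A ×ˢ B) l ^ 2 ≤
      4 * r * (#A * #B * (s * s - 1)) := by
  set G := A ×ˢ B
  set φ : ℝ × ℝ → ℕ × ℕ := fun p => (blockIdx s A p.1, blockIdx s B p.2)
  set D := {x ∈ G.offDiag | φ x.1 = φ x.2}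
  have hline : ∀ l ∈ Λ, 4 * r ≤ pointCount G l →
      pointCount G l ^ 2 ≤ 4 * r * #{x ∈ D | x.1 ∈ l ∧ x.2 ∈ l} := by
    intro l hl hr
    set T := {p ∈ G | p ∈ l}
    have hcells : #(T.image φ) ≤ r + r :=
      card_image_le_of_isLine (hΛ l hl) (fun p hp => (mem_filter.1 hp).2) (blockIdx_monotone s A)
        (blockIdx_monotone s B) (fun p hp => blockIdx_lt hA (mem_product.1 (mem_filter.1 hp).1).1)
        (fun p hp => blockIdx_lt hB (mem_product.1 (mem_filter.1 hp).1).2)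
    have hT : {x ∈ T.offDiag | φ x.1 = φ x.2} = {x ∈ D | x.1 ∈ l ∧ x.2 ∈ l} := by
      ext x
      simp only [T, D, mem_filter, mem_offDiag]
      tauto
    have hCS := sq_card_le_card_image_mul T φ
    rw [hT] at hCS
    change #T ^ 2 ≤ 4 * r * _
    change 4 * r ≤ #T at hr
    nlinarith
  have hfiber : ∀ x ∈ G, #{y ∈ G | φ y = φ x} ≤ s * s := by
    intro x _
    have : {y ∈ G | φ y = φ x} = {a ∈ A | blockIdx s A a = blockIdx s A x.1} ×ˢ
        {b ∈ B | blockIdx s B b = blockIdx s B x.2} := by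
      ext y
      simp only [G, φ, mem_filter, mem_product, Prod.ext_iff]
      tauto
    rw [this, card_product]
    exact Nat.mul_le_mul (card_filter_blockIdx_eq_le hs A _) (card_filter_blockIdx_eq_le hs B _)
  calc ∑ l ∈ Λ with 4 * r ≤ pointCount G l, pointCount G l ^ 2
      ≤ ∑ l ∈ Λ with 4 * r ≤ pointCount G l, 4 * r * #{x ∈ D | x.1 ∈ l ∧ x.2 ∈ l} :=
        sum_le_sum fun l hl => hline l (mem_filter.1 hl).1 (mem_filter.1 hl).2
    _ ≤ 4 * r * ∑ l ∈ Λ, #{x ∈ D | x.1 ∈ l ∧ x.2 ∈ l} := by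
        rw [← mul_sum]
        exact Nat.mul_le_mul_left _ (sum_le_sum_of_subset (filter_subset _ _))
    _ ≤ 4 * r * #D := Nat.mul_le_mul_left _ <| sum_card_filter_mem_mem_le_card hΛ D fun x hx =>
        (mem_offDiag.1 (mem_filter.1 hx).1).2.2
    _ ≤ 4 * r * (#A * #B * (s * s - 1)) := by
        rw [← card_product]
        exact Nat.mul_le_mul_left _ (card_filter_offDiag_le G φ hfiber)

lemma sum_sq_pointCount_le (hΛ : ∀ l ∈ Λ, IsLine l) (P : Finset (ℝ × ℝ))
    (h2 : ∀ l ∈ Λ, 2 ≤ pointCount P l) : ∑ l ∈ Λ, pointCount P l ^ 2 ≤ 2 * #P ^ 2 :=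
  calc ∑ l ∈ Λ, pointCount P l ^ 2 ≤ ∑ l ∈ Λ, 2 * (pointCount P l * (pointCount P l - 1)) :=
        sum_le_sum fun l hl => by
          have := h2 l hl
          rw [sq, Nat.mul_sub_one]
          have := Nat.mul_le_mul_left (pointCount P l) this
          omega
    _ ≤ 2 * #P ^ 2 := by
        rw [← mul_sum]
        exact Nat.mul_le_mul_left _ <| (sum_pointCount_mul_pred_le hΛ P).trans <|
          sq (#P) ▸ Nat.mul_le_mul_left _ (Nat.sub_le _ _)

/-- Szemerédi–Trotter for a grid: at most `O(n⁴ / k³)` lines are `k`-rich. The cells are blocks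
of `s ≈ 4n / k` consecutive coordinates. -/
lemma mul_sum_sq_pointCount_le (hΛ : ∀ l ∈ Λ, IsLine l) {A B : Finset ℝ} {n : ℕ} (hA : #A ≤ n)
    (hB : #B ≤ n) (h2 : ∀ l ∈ Λ, 2 ≤ pointCount (A ×ˢ B) l) (k : ℕ) :
    k * ∑ l ∈ Λ with k ≤ pointCount (A ×ˢ B) l, pointCount (A ×ˢ B) l ^ 2 ≤ 128 * n ^ 4 := by
  have hG : #(A ×ˢ B) ≤ n * n := card_product A B ▸ Nat.mul_le_mul hA hB
  rcases lt_or_ge k 4 with hk | hk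
  · calc k * ∑ l ∈ Λ with k ≤ pointCount (A ×ˢ B) l, pointCount (A ×ˢ B) l ^ 2
        ≤ 3 * ∑ l ∈ Λ, pointCount (A ×ˢ B) l ^ 2 :=
          Nat.mul_le_mul (by omega) (sum_le_sum_of_subset (filter_subset _ _))
      _ ≤ 3 * (2 * (n * n) ^ 2) :=
          Nat.mul_le_mul_left _ <| (sum_sq_pointCount_le hΛ _ h2).trans <| by gcongr
      _ ≤ 128 * n ^ 4 := by ring_nf; omega
  obtain ⟨r, hr_def⟩ : ∃ r, r = k / 4 := ⟨_, rfl⟩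
  obtain ⟨s, hs_def⟩ : ∃ s, s = n / r + 1 := ⟨_, rfl⟩
  have hr : 0 < r := by omega
  have hk8 : k ≤ 8 * r := by omega
  have hns : n ≤ s * r := by
    have := Nat.lt_div_mul_add (a := n) hr
    rw [hs_def, add_mul, one_mul]
    omega
  have hC := sum_sq_pointCount_le_of_blocks hΛ A B (hs_def ▸ Nat.succ_pos _) (hA.trans hns)
    (hB.trans hns)
  have hsub : ∑ l ∈ Λ with k ≤ pointCount (A ×ˢ B) l, pointCount (A ×ˢ B) l ^ 2 ≤
      ∑ l ∈ Λ with 4 * r ≤ pointCount (A ×ˢ B) l, pointCount (A ×ˢ B) l ^ 2 :=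
    sum_le_sum_of_subset <| monotone_filter_right Λ fun l h => by omega
  rcases lt_or_ge n r with hnr | hrn
  · have hs1 : s = 1 := by rw [hs_def, Nat.div_eq_of_lt hnr]
    rw [hs1] at hC
    simp only [mul_one, Nat.sub_self, mul_zero] at hC
    have : ∑ l ∈ Λ with k ≤ pointCount (A ×ˢ B) l, pointCount (A ×ˢ B) l ^ 2 = 0 := by omega
    rw [this, mul_zero]
    exact Nat.zero_le _
  have hrs : r * s ≤ 2 * n := by
    have := Nat.div_mul_le_self n r
    rw [hs_def, mul_add, mul_one, mul_comm]
    omega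
  calc k * ∑ l ∈ Λ with k ≤ pointCount (A ×ˢ B) l, pointCount (A ×ˢ B) l ^ 2
      ≤ (8 * r) * (4 * r * (n * n * (s * s))) := by
        refine Nat.mul_le_mul hk8 (hsub.trans (hC.trans ?_))
        exact Nat.mul_le_mul_left _ (Nat.mul_le_mul (Nat.mul_le_mul hA hB) (Nat.sub_le _ _))
    _ = 32 * (r * s) ^ 2 * n ^ 2 := by ring
    _ ≤ 32 * (2 * n) ^ 2 * n ^ 2 := by gcongr
    _ = 128 * n ^ 4 := by ring

lemma Finset.sum_nsmul_eq_sum_Icc_sum_filter {ι M : Type*} [AddCommMonoid M] (s : Finset ι)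
    (f : ι → ℕ) (g : ι → M) {N : ℕ} (hf : ∀ i ∈ s, f i ≤ N) :
    ∑ i ∈ s, f i • g i = ∑ k ∈ Icc 1 N, ∑ i ∈ s with k ≤ f i, g i := by
  simp_rw [sum_filter]
  rw [sum_comm]
  refine sum_congr rfl fun i hi => ?_
  rw [← sum_filter, sum_const]
  congr
  have : {k ∈ Icc 1 N | k ≤ f i} = Icc 1 (f i) := by
    ext k
    simp only [mem_filter, mem_Icc]
    have := hf i hi
    omega
  simp [this]

lemma harmonic_sq_le (n : ℕ) : (harmonic (n ^ 2) : ℝ) ≤ 3 * Real.log (2 + n) := by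
  rcases Nat.eq_zero_or_pos n with rfl | hn
  · simpa using Real.log_nonneg one_le_two
  have hn' : (1 : ℝ) ≤ n := Nat.one_le_cast.2 hn
  have h1 : 1 < Real.log (2 + n) :=
    (Real.lt_log_iff_exp_lt (by positivity)).2 (by linarith [Real.exp_one_lt_d9])
  have h2 : Real.log n ≤ Real.log (2 + n) := Real.log_le_log (by positivity) (by linarith)
  have := harmonic_le_one_add_log (n ^ 2)
  rw [Nat.cast_pow, Real.log_pow] at this
  push_cast at this
  linarith

/-- Layer-cake summation of the grid Szemerédi–Trotter bound over `k = 1, …, n²`. -/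
lemma sum_pointCount_pow_three_le (hΛ : ∀ l ∈ Λ, IsLine l) {A B : Finset ℝ} {n : ℕ}
    (hA : #A ≤ n) (hB : #B ≤ n) (h2 : ∀ l ∈ Λ, 2 ≤ pointCount (A ×ˢ B) l) :
    ∑ l ∈ Λ, (pointCount (A ×ˢ B) l : ℝ) ^ 3 ≤ 384 * n ^ 4 * Real.log (2 + n) := by
  set m := pointCount (A ×ˢ B)
  have hm : ∀ l ∈ Λ, m l ≤ n ^ 2 := fun l _ =>
    (pointCount_le_card _ l).trans (card_product A B ▸ sq n ▸ Nat.mul_le_mul hA hB)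
  have hcake : ∑ l ∈ Λ, m l ^ 3 = ∑ k ∈ Icc 1 (n ^ 2), ∑ l ∈ Λ with k ≤ m l, m l ^ 2 := by
    rw [← sum_nsmul_eq_sum_Icc_sum_filter Λ m _ hm]
    simp only [smul_eq_mul, pow_succ']
  have hk : ∀ k ∈ Icc 1 (n ^ 2),
      ((∑ l ∈ Λ with k ≤ m l, m l ^ 2 : ℕ) : ℝ) ≤ 128 * n ^ 4 * (k : ℝ)⁻¹ := by
    intro k hk
    have hk0 : (0 : ℝ) < k := Nat.cast_pos.2 (mem_Icc.1 hk).1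
    rw [← div_eq_mul_inv, le_div_iff₀ hk0, mul_comm]
    exact_mod_cast mul_sum_sq_pointCount_le hΛ hA hB h2 k
  calc ∑ l ∈ Λ, (m l : ℝ) ^ 3 = ∑ k ∈ Icc 1 (n ^ 2), ((∑ l ∈ Λ with k ≤ m l, m l ^ 2 : ℕ) : ℝ) := by
        exact_mod_cast hcake
    _ ≤ ∑ k ∈ Icc 1 (n ^ 2), 128 * n ^ 4 * (k : ℝ)⁻¹ := sum_le_sum hk
    _ = 128 * n ^ 4 * harmonic (n ^ 2) := by rw [← mul_sum, harmonic_eq_sum_Icc]; push_cast; rfl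
    _ ≤ 128 * n ^ 4 * (3 * Real.log (2 + n)) := by gcongr; exact harmonic_sq_le n
    _ = 384 * n ^ 4 * Real.log (2 + n) := by ring

end Incidences

lemma Finset.sum_mul_rpow_le {ι : Type*} (s : Finset ι) (w g : ι → ℝ) (hw : ∀ i, 0 ≤ w i)
    (hg : ∀ i, 0 ≤ g i) {t : ℝ} (ht0 : 0 ≤ t) (ht1 : t ≤ 1) :
    ∑ i ∈ s, w i * g i ^ t ≤ (∑ i ∈ s, w i) ^ (1 - t) * (∑ i ∈ s, w i * g i) ^ t := by
  rcases ht0.eq_or_lt with rfl | ht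
  · simp
  have := Real.inner_le_weight_mul_Lp_of_nonneg s ((one_le_inv₀ ht).2 ht1) w (g · ^ t) hw
    fun i => Real.rpow_nonneg (hg i) t
  simpa only [inv_inv, ← Real.rpow_mul (hg _), mul_inv_cancel₀ ht.ne', Real.rpow_one] using this

lemma sum_rpow_le_of_sum_le_of_sum_pow_three_le {ι : Type*} (s : Finset ι) (f : ι → ℝ)
    (hf : ∀ i, 0 ≤ f i) {K a b p : ℝ} (hK : 0 ≤ K) (ha : 0 ≤ a) (hb : 0 ≤ b) (hp1 : 1 ≤ p)
    (hp3 : p ≤ 3) (h1 : ∑ i ∈ s, f i ≤ K * (a ^ 2 * b ^ 2)) (h3 : ∑ i ∈ s, f i ^ 3 ≤ K * b ^ 4) :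
    ∑ i ∈ s, f i ^ p ≤ K * a ^ (3 - p) * b ^ (p + 1) := by
  set t := (p - 1) / 2
  have ht0 : 0 ≤ t := by simp only [t]; linarith
  have ht1 : t ≤ 1 := by simp only [t]; linarith
  have hfp : ∀ i, f i ^ p = f i * (f i ^ 2) ^ t := fun i => by
    rw [← Real.rpow_natCast_mul (hf i), ← Real.rpow_one_add' (hf i) (by simp only [t]; linarith)]
    congr 1
    simp only [t]; push_cast; ring
  have hpow : ∀ {x : ℝ} (n : ℕ) (y : ℝ), 0 ≤ x → (x ^ n) ^ y = x ^ (n * y) := fun n y hx =>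
    (Real.rpow_natCast_mul hx n y).symm
  calc ∑ i ∈ s, f i ^ p = ∑ i ∈ s, f i * (f i ^ 2) ^ t := sum_congr rfl fun i _ => hfp i
    _ ≤ (∑ i ∈ s, f i) ^ (1 - t) * (∑ i ∈ s, f i * f i ^ 2) ^ t :=
        s.sum_mul_rpow_le f (f · ^ 2) hf (fun i => sq_nonneg _) ht0 ht1
    _ ≤ (K * (a ^ 2 * b ^ 2)) ^ (1 - t) * (K * b ^ 4) ^ t := by
        simp_rw [← pow_succ']
        exact mul_le_mul (Real.rpow_le_rpow (sum_nonneg fun i _ => hf i) h1 (by linarith))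
          (Real.rpow_le_rpow (sum_nonneg fun i _ => pow_nonneg (hf i) 3) h3 (by linarith))
          (Real.rpow_nonneg (sum_nonneg fun i _ => pow_nonneg (hf i) 3) t)
          (Real.rpow_nonneg (by positivity) _)
    _ = K * a ^ (3 - p) * b ^ (p + 1) := by
        rw [Real.mul_rpow hK (by positivity), Real.mul_rpow hK (by positivity),
          Real.mul_rpow (by positivity) (by positivity), hpow 2 _ ha, hpow 2 _ hb, hpow 4 _ hb,
          mul_mul_mul_comm, ← Real.rpow_add' hK (by norm_num), mul_assoc,
          ← Real.rpow_add' hb (by simp only [t]; push_cast; linarith), sub_add_cancel,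
          Real.rpow_one, mul_assoc]
        congr 3 <;> simp only [t] <;> push_cast <;> ring

theorem rich_lines_moment_bound :
    ∃ C c : ℝ, 0 < C ∧ 0 ≤ c ∧
      ∀ A : Fin 3 → Finset ℝ, (A 0).card ≤ (A 1).card → (A 1).card ≤ (A 2).card →
      ∀ (i : Fin 3) (p : ℝ), 1 ≤ p → p ≤ 3 →
        (∑ᶠ l ∈ {l ∈ lineFamily (A 0) (A 1) (A 2) | 2 ≤ alphaCnt (A i) l},
            (alphaCnt (A i) l : ℝ) ^ p) ≤
          C * ((A 0).card : ℝ) ^ (3 - p) * ((A i).card : ℝ) ^ (p + 1) *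
            Real.log (2 + ((A 2).card : ℝ)) ^ c := by
  refine ⟨384, 1, by norm_num, zero_le_one, fun A h01 h12 i p hp1 hp3 => ?_⟩
  set G := A i ×ˢ A i
  set L := Real.log (2 + ((A 2).card : ℝ))
  obtain ⟨Λ, hΛ, hmem⟩ := exists_finset_coe_eq_lineFamily (A 0) (A 1) (A 2) (A i)
  rw [← hΛ, finsum_mem_coe_finset, Real.rpow_one]
  simp_rw [alphaCnt_eq_pointCount]
  have hlog : Real.log (2 + ((A i).card : ℝ)) ≤ L := Real.log_le_log (by positivity) <| by
    fin_cases i <;> simp <;> exact_mod_cast (by omega)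
  have hL : 2 ≤ 384 * L := by
    have := Real.log_le_log two_pos (le_add_of_nonneg_right (Nat.cast_nonneg (A 2).card))
    linarith [Real.log_two_gt_d9]
  have hfirst := sum_pointCount_le (fun l hl => (hmem l hl).1) _ G (fun l hl => (hmem l hl).2.2)
    fun l hl => (hmem l hl).2.1
  have hthird := sum_pointCount_pow_three_le (fun l hl => (hmem l hl).1) le_rfl le_rfl
    fun l hl => (hmem l hl).2.1
  refine (sum_rpow_le_of_sum_le_of_sum_pow_three_le Λ _ (fun l => Nat.cast_nonneg _)
    (K := 384 * L) (by linarith) (Nat.cast_nonneg _) (Nat.cast_nonneg _) hp1 hp3 ?_ ?_).trans_eq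
    (by ring)
  · calc ∑ l ∈ Λ, (pointCount G l : ℝ) ≤ 2 * ((A 0).card ^ 2 * (A i).card ^ 2) := by
          rw [card_product, card_product] at hfirst
          exact_mod_cast hfirst.trans_eq (by ring)
      _ ≤ 384 * L * ((A 0).card ^ 2 * (A i).card ^ 2) := by gcongr
  · calc ∑ l ∈ Λ, (pointCount G l : ℝ) ^ 3
        ≤ 384 * (A i).card ^ 4 * Real.log (2 + ((A i).card : ℝ)) := hthird
      _ ≤ 384 * (A i).card ^ 4 * L := by gcongr
      _ = 384 * L * (A i).card ^ 4 := by ring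
end

section
/- Let k > 1 be an integer. Then there exist constants C_k, c_k > 0 and γ_k ≥ 0, depending only on k, such that for every finite set A ⊆ ℝ with |A| ≥ 2 there are sets B″ ⊆ B ⊆ A, a real number t with 1 ≤ t ≤ |B|, and the set P = {x ∈ B − B : t ≤ r_{B−B}(x) < 2t}, satisfying: (i) |B| ≥ c_k|A| and |B″| ≥ c_k·|B|·(log|A|)^{−γ_k}; (ii) c_k·(log|A|)^{−γ_k}·|P|·t^k ≤ E_k⁺(B) ≤ C_k·(log|A|)^{γ_k}·|P|·t^k; (iii) for every b ∈ B″, c_k·(log|A|)^{−γ_k}·|P|·t·|A|^{−1} ≤ r_{P+B}(b) ≤ C_k·(log|A|)^{γ_k}·|P|·t·|A|^{−1}. -/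
/-!
Starting from `B = A`, pigeonhole a dyadic level `t` of `r_{B−B}` that carries a `1/log|A|` share
of `E_k⁺(B)`, and let `P` be the popular differences at that level. Since
`∑_{b ∈ B} r_{P+B}(b) = ∑_{x ∈ P} r_{B−B}(x) ≈ |P| t`, half of this mass sits on the rich
elements `b`, those with `r_{P+B}(b) ≥ |P| t / (2|A|)`. If they form a `1/log²|A|` proportion of
`B`, Markov's inequality trims them to `B''`. Otherwise they are removed: this costs few elements but, every
lost representation of a popular difference being worth `t^{k−1}`, a `1/log|A|` share of the
energy. Removing half of `A` takes about `log²|A|` rounds, after which the energy would be below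
`|A|²/16`, contradicting `E_k⁺(B) ≥ |B|²`; so `|B| ≥ |A|/2` throughout.
-/

open Finset Pointwise

/-- `rsub A B x = #{(a,b) ∈ A × B : a − b = x}`. -/
noncomputable def rsub (A B : Finset ℝ) (x : ℝ) : ℕ :=
  ((A ×ˢ B).filter (fun p => p.1 - p.2 = x)).card

/-- `radd P B x = #{(p,b) ∈ P × B : p + b = x}`. -/
noncomputable def radd (P B : Finset ℝ) (x : ℝ) : ℕ :=
  ((P ×ˢ B).filter (fun p => p.1 + p.2 = x)).card

/-- The `k`-th moment additive energy `E_k⁺(A) = ∑ₓ r_{A−A}(x)^k`. -/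
noncomputable def Ek (k : ℕ) (A : Finset ℝ) : ℕ :=
  ∑ x ∈ A - A, rsub A A x ^ k

/-- The set of popular differences `P = {x ∈ B − B : t ≤ r_{B−B}(x) < 2t}`. -/
noncomputable def popDiff (B : Finset ℝ) (t : ℝ) : Finset ℝ :=
  (B - B).filter (fun x => t ≤ (rsub B B x : ℝ) ∧ (rsub B B x : ℝ) < 2 * t)

lemma rsub_eq_sum (A B : Finset ℝ) (x : ℝ) :
    rsub A B x = ∑ a ∈ A, if a - x ∈ B then 1 else 0 := by
  rw [rsub, card_filter, sum_product]
  refine sum_congr rfl fun a _ => ?_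
  simp_rw [show ∀ b : ℝ, (a - b = x) = (b = a - x) from fun b => propext (by grind)]
  exact sum_ite_eq' B (a - x) fun _ => 1

lemma radd_eq_sum (P B : Finset ℝ) (x : ℝ) :
    radd P B x = ∑ p ∈ P, if x - p ∈ B then 1 else 0 := by
  rw [radd, card_filter, sum_product]
  refine sum_congr rfl fun p _ => ?_
  simp_rw [show ∀ b : ℝ, (p + b = x) = (b = x - p) from fun b => propext (by grind)]
  exact sum_ite_eq' B (x - p) fun _ => 1

/-- Both sides count the pairs `(b, p) ∈ S × P` with `b - p ∈ B`. -/
lemma sum_radd_eq_sum_rsub (P B S : Finset ℝ) :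
    ∑ b ∈ S, radd P B b = ∑ p ∈ P, rsub S B p := by
  simp only [radd_eq_sum, rsub_eq_sum]
  exact sum_comm

lemma rsub_le_card_left (A B : Finset ℝ) (x : ℝ) : rsub A B x ≤ A.card := by
  rw [rsub_eq_sum, card_eq_sum_ones]
  exact sum_le_sum fun a _ => by split_ifs <;> omega

lemma rsub_pos_of_mem_sub {B : Finset ℝ} {x : ℝ} (hx : x ∈ B - B) : 0 < rsub B B x := by
  obtain ⟨a, ha, b, hb, rfl⟩ := mem_sub.1 hx
  exact card_pos.2 ⟨(a, b), by simp [ha, hb]⟩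

lemma rsub_eq_zero_of_notMem_sub {A B : Finset ℝ} {x : ℝ} (hx : x ∉ A - B) : rsub A B x = 0 := by
  rw [rsub, card_eq_zero, filter_eq_empty_iff]
  rintro ⟨a, b⟩ hab rfl
  exact hx (sub_mem_sub (mem_product.1 hab).1 (mem_product.1 hab).2)

lemma sum_rsub_self (B : Finset ℝ) : ∑ x ∈ B - B, rsub B B x = B.card ^ 2 := by
  rw [sq, ← card_product]
  exact (card_eq_sum_card_fiberwise fun p hp =>
    sub_mem_sub (mem_product.1 hp).1 (mem_product.1 hp).2).symm

lemma card_sq_le_Ek {k : ℕ} (hk : k ≠ 0) (B : Finset ℝ) : B.card ^ 2 ≤ Ek k B := by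
  rw [← sum_rsub_self, Ek]
  exact sum_le_sum fun x _ => Nat.le_self_pow hk _

lemma Ek_le_card_pow {k : ℕ} (hk : k ≠ 0) (B : Finset ℝ) : Ek k B ≤ B.card ^ (k + 1) := by
  obtain ⟨k, rfl⟩ := Nat.exists_eq_add_of_le' (Nat.one_le_iff_ne_zero.2 hk)
  calc Ek (k + 1) B ≤ ∑ x ∈ B - B, B.card ^ k * rsub B B x :=
        sum_le_sum fun x _ => by
          rw [pow_succ]; exact Nat.mul_le_mul_right _ (Nat.pow_le_pow_left (rsub_le_card_left ..) _)
    _ = B.card ^ (k + 1 + 1) := by rw [← mul_sum, sum_rsub_self]; ring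

lemma rsub_sdiff_add_rsub_le {B G : Finset ℝ} (hG : G ⊆ B) (x : ℝ) :
    rsub (B \ G) (B \ G) x + rsub G B x ≤ rsub B B x := by
  simp only [rsub_eq_sum]
  rw [← sum_sdiff hG]
  gcongr with a
  split_ifs <;> simp_all

lemma pow_add_mul_pow_pred_le {k : ℕ} (hk : k ≠ 0) {a l r : ℕ} (h : a + l ≤ r) :
    a ^ k + l * r ^ (k - 1) ≤ r ^ k := by
  obtain ⟨k, rfl⟩ := Nat.exists_eq_add_of_le' (Nat.one_le_iff_ne_zero.2 hk)
  calc a ^ (k + 1) + l * r ^ k ≤ a * r ^ k + l * r ^ k := by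
        rw [pow_succ']; gcongr; omega
    _ ≤ r ^ (k + 1) := by rw [← add_mul, pow_succ']; gcongr

lemma Ek_sdiff_add_le {k : ℕ} (hk : k ≠ 0) {B G : Finset ℝ} (hG : G ⊆ B) :
    Ek k (B \ G) + ∑ x ∈ B - B, rsub G B x * rsub B B x ^ (k - 1) ≤ Ek k B := by
  have hsub : B \ G - B \ G ⊆ B - B := sub_subset_sub sdiff_subset sdiff_subset
  rw [Ek, sum_subset hsub fun x _ hx => by rw [rsub_eq_zero_of_notMem_sub hx, zero_pow hk],
    ← sum_add_distrib, Ek]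
  exact sum_le_sum fun x _ => pow_add_mul_pow_pred_le hk (rsub_sdiff_add_rsub_le hG x)

section PopularDifferences

variable {B : Finset ℝ} {t : ℝ}

lemma le_rsub_of_mem_popDiff {x : ℝ} (hx : x ∈ popDiff B t) : t ≤ rsub B B x :=
  (mem_filter.1 hx).2.1

lemma rsub_lt_of_mem_popDiff {x : ℝ} (hx : x ∈ popDiff B t) : (rsub B B x : ℝ) < 2 * t :=
  (mem_filter.1 hx).2.2

lemma le_card_of_popDiff_nonempty (hP : (popDiff B t).Nonempty) : t ≤ B.card := by
  obtain ⟨x, hx⟩ := hP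
  exact (le_rsub_of_mem_popDiff hx).trans (by exact_mod_cast rsub_le_card_left B B x)

lemma card_popDiff_mul_le_sum_rsub :
    ((popDiff B t).card : ℝ) * t ≤ ∑ x ∈ popDiff B t, (rsub B B x : ℝ) := by
  simpa using card_nsmul_le_sum _ _ _ fun x hx => le_rsub_of_mem_popDiff hx

lemma sum_rsub_le_two_mul_card_popDiff :
    ∑ x ∈ popDiff B t, (rsub B B x : ℝ) ≤ 2 * (popDiff B t).card * t := by
  have := sum_le_card_nsmul _ _ _ fun x hx => (rsub_lt_of_mem_popDiff (B := B) (t := t) hx).le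
  rw [nsmul_eq_mul] at this
  linarith

lemma card_popDiff_mul_pow_le_Ek (k : ℕ) (ht : 0 ≤ t) :
    ((popDiff B t).card : ℝ) * t ^ k ≤ Ek k B :=
  calc ((popDiff B t).card : ℝ) * t ^ k ≤ ∑ x ∈ popDiff B t, (rsub B B x : ℝ) ^ k := by
        simpa using card_nsmul_le_sum _ _ _ fun x hx =>
          pow_le_pow_left₀ ht (le_rsub_of_mem_popDiff hx) k
    _ ≤ ∑ x ∈ B - B, (rsub B B x : ℝ) ^ k :=
        sum_le_sum_of_subset_of_nonneg (filter_subset _ _) fun _ _ _ => by positivity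
    _ = Ek k B := by simp [Ek]

lemma popDiff_two_pow (B : Finset ℝ) (j : ℕ) :
    popDiff B (2 ^ j) = (B - B).filter fun x => Nat.log 2 (rsub B B x) = j := by
  ext x
  simp only [popDiff, mem_filter, and_congr_right_iff]
  intro hx
  rw [Nat.log_eq_iff (Or.inr ⟨one_lt_two, (rsub_pos_of_mem_sub hx).ne'⟩), ← pow_succ']
  exact and_congr (by exact_mod_cast Iff.rfl) (by exact_mod_cast Iff.rfl)

/-- Dyadic pigeonholing over the `L` level sets `r_{B−B} ∈ [2^j, 2^{j+1})`. -/
lemma exists_Ek_le_card_popDiff (k : ℕ) {L : ℕ} (hB : B.card < 2 ^ L) :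
    ∃ j : ℕ, (Ek k B : ℝ) ≤ 2 ^ k * L * (popDiff B (2 ^ j)).card * (2 ^ j) ^ k := by
  set S : ℕ → ℝ := fun j => ∑ x ∈ popDiff B (2 ^ j), (rsub B B x : ℝ) ^ k
  have hEk : (Ek k B : ℝ) = ∑ j ∈ range L, S j := by
    simp only [S, popDiff_two_pow, Ek, Nat.cast_sum, Nat.cast_pow]
    refine (sum_fiberwise_of_maps_to (fun x hx => mem_range.2 ?_) _).symm
    exact Nat.log_lt_of_lt_pow (rsub_pos_of_mem_sub hx).ne'
      ((rsub_le_card_left B B x).trans_lt hB)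
  rcases (range L).eq_empty_or_nonempty with hL | hL
  · exact ⟨0, by rw [hEk, hL, sum_empty]; positivity⟩
  obtain ⟨j, -, hj⟩ := exists_max_image _ S hL
  refine ⟨j, ?_⟩
  have hSj : S j ≤ (popDiff B (2 ^ j)).card * (2 * 2 ^ j) ^ k := by
    simpa using sum_le_card_nsmul _ _ _ fun x hx =>
      pow_le_pow_left₀ (Nat.cast_nonneg _) (rsub_lt_of_mem_popDiff hx).le k
  calc (Ek k B : ℝ) ≤ L * S j := by
        simpa [hEk] using sum_le_card_nsmul _ _ _ hj
    _ ≤ L * ((popDiff B (2 ^ j)).card * (2 * 2 ^ j) ^ k) := by gcongr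
    _ = _ := by ring

end PopularDifferences

lemma sum_le_sum_filter_le_add_card_mul {ι : Type*} (s : Finset ι) (f : ι → ℝ) {τ : ℝ}
    (hτ : 0 ≤ τ) : ∑ i ∈ s, f i ≤ ∑ i ∈ s with τ ≤ f i, f i + s.card * τ := by
  rw [← sum_filter_add_sum_filter_not s (τ ≤ f ·)]
  gcongr
  calc ∑ i ∈ s with ¬τ ≤ f i, f i ≤ (s.filter fun i => ¬τ ≤ f i).card * τ := by
        simpa using sum_le_card_nsmul (s.filter fun i => ¬τ ≤ f i) f τ fun i hi =>
          (not_le.1 (mem_filter.1 hi).2).le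
    _ ≤ s.card * τ := by gcongr; exact filter_subset _ _

lemma card_filter_lt_mul_le_sum {ι : Type*} (s : Finset ι) {f : ι → ℝ} (hf : ∀ i ∈ s, 0 ≤ f i)
    (τ : ℝ) : (s.filter fun i => τ < f i).card * τ ≤ ∑ i ∈ s, f i :=
  calc (s.filter fun i => τ < f i).card * τ ≤ ∑ i ∈ s with τ < f i, f i := by
        simpa using card_nsmul_le_sum (s.filter fun i => τ < f i) f τ fun i hi =>
          (mem_filter.1 hi).2.le
    _ ≤ ∑ i ∈ s, f i := sum_le_sum_of_subset_of_nonneg (filter_subset _ _) fun i hi _ => hf i hi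

noncomputable def richPart (A B : Finset ℝ) (t : ℝ) : Finset ℝ :=
  B.filter fun b => ((popDiff B t).card : ℝ) * t ≤ 2 * A.card * radd (popDiff B t) B b

section Round

variable {A B : Finset ℝ} {t : ℝ}

lemma sum_radd_eq_sum_rsub_popDiff :
    ∑ b ∈ B, (radd (popDiff B t) B b : ℝ) = ∑ x ∈ popDiff B t, (rsub B B x : ℝ) := by
  exact_mod_cast sum_radd_eq_sum_rsub (popDiff B t) B B

lemma card_popDiff_mul_le_two_mul_sum_radd_richPart (hBA : B ⊆ A) (ht : 0 ≤ t) :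
    ((popDiff B t).card : ℝ) * t ≤ 2 * ∑ b ∈ richPart A B t, (radd (popDiff B t) B b : ℝ) := by
  rcases A.eq_empty_or_nonempty with rfl | hA
  · simpa [subset_empty.1 hBA, popDiff] using sum_nonneg fun _ _ => Nat.cast_nonneg _
  have hn : (0 : ℝ) < A.card := by exact_mod_cast hA.card_pos
  have hB : (B.card : ℝ) ≤ A.card := by exact_mod_cast card_le_card hBA
  have := sum_le_sum_filter_le_add_card_mul B (fun b => (radd (popDiff B t) B b : ℝ))
    (τ := (popDiff B t).card * t / (2 * A.card)) (by positivity)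
  rw [sum_radd_eq_sum_rsub_popDiff] at this
  have hpoor :
      (B.card : ℝ) * ((popDiff B t).card * t / (2 * A.card)) ≤ (popDiff B t).card * t / 2 := by
    rw [mul_div_assoc', div_le_div_iff₀ (by positivity) two_pos]
    nlinarith [mul_nonneg (Nat.cast_nonneg (popDiff B t).card) ht]
  have hrich : ∑ b ∈ B with (popDiff B t).card * t / (2 * A.card) ≤ (radd (popDiff B t) B b : ℝ),
      (radd (popDiff B t) B b : ℝ) = ∑ b ∈ richPart A B t, (radd (popDiff B t) B b : ℝ) := by
    simp only [richPart, div_le_iff₀' (by positivity : (0 : ℝ) < 2 * A.card)]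
  linarith [card_popDiff_mul_le_sum_rsub (B := B) (t := t)]

/-- Each of the `≥ |P| t / 2` representations `x = b - y`, `x ∈ P`, with `b` rich costs `t^{k-1}`
energy. -/
lemma Ek_sdiff_richPart_le {k : ℕ} (hk : k ≠ 0) (hBA : B ⊆ A) (ht : 0 ≤ t) {L : ℝ}
    (hL : 0 < L) (hE : (Ek k B : ℝ) ≤ 2 ^ k * L * (popDiff B t).card * t ^ k) :
    (Ek k (B \ richPart A B t) : ℝ) ≤ (1 - 1 / (2 ^ (k + 1) * L)) * Ek k B := by
  set G := richPart A B t
  set P := popDiff B t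
  have hdrop : (Ek k (B \ G) : ℝ) + ∑ x ∈ B - B, (rsub G B x : ℝ) * (rsub B B x : ℝ) ^ (k - 1)
      ≤ Ek k B := by exact_mod_cast Ek_sdiff_add_le hk (filter_subset _ B)
  have hswap : ∑ b ∈ G, (radd P B b : ℝ) = ∑ x ∈ P, (rsub G B x : ℝ) := by
    exact_mod_cast sum_radd_eq_sum_rsub P B G
  have hmass : (P.card : ℝ) * t ^ k / 2 ≤
      ∑ x ∈ B - B, (rsub G B x : ℝ) * (rsub B B x : ℝ) ^ (k - 1) :=
    calc (P.card : ℝ) * t ^ k / 2 = t ^ (k - 1) * (P.card * t / 2) := by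
          rw [← pow_sub_one_mul hk]; ring
      _ ≤ t ^ (k - 1) * ∑ b ∈ G, (radd P B b : ℝ) := by
          gcongr; linarith [card_popDiff_mul_le_two_mul_sum_radd_richPart hBA ht]
      _ = ∑ x ∈ P, (rsub G B x : ℝ) * t ^ (k - 1) := by
          rw [mul_comm, ← sum_mul, hswap]
      _ ≤ ∑ x ∈ P, (rsub G B x : ℝ) * (rsub B B x : ℝ) ^ (k - 1) :=
          sum_le_sum fun x hx => by gcongr; exact le_rsub_of_mem_popDiff hx
      _ ≤ ∑ x ∈ B - B, (rsub G B x : ℝ) * (rsub B B x : ℝ) ^ (k - 1) :=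
          sum_le_sum_of_subset_of_nonneg (filter_subset _ _) fun _ _ _ => by positivity
  have : (Ek k B : ℝ) / (2 ^ (k + 1) * L) ≤ P.card * t ^ k / 2 := by
    rw [div_le_div_iff₀ (by positivity) two_pos, pow_succ]
    linarith
  rw [sub_mul, one_mul, one_div_mul_eq_div]
  linarith

/-- By Markov, at most `|A| / (4 l)` elements of `B` have `r_{P+B}` above `8 l |P| t / |A|`. -/
lemma card_le_two_mul_card_filter_radd_le (hBA : B ⊆ A) (hBcard : (A.card : ℝ) ≤ 2 * B.card)
    (ht : 0 < t) (hP : (popDiff B t).Nonempty) {l : ℝ} (hl : 0 < l)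
    (hrich : (B.card : ℝ) ≤ l * (richPart A B t).card) :
    (B.card : ℝ) ≤ 2 * l * ((richPart A B t).filter fun b =>
      (radd (popDiff B t) B b : ℝ) ≤ 8 * l * (popDiff B t).card * t / A.card).card := by
  set P := popDiff B t
  set τ : ℝ := 8 * l * P.card * t / A.card
  set H := B.filter fun b => τ < radd P B b
  have hn : (0 : ℝ) < A.card := ht.trans_le ((le_card_of_popDiff_nonempty hP).trans
    (by exact_mod_cast card_le_card hBA))
  have hPt : (0 : ℝ) < P.card * t := by have := hP.card_pos; positivity
  have hH : l * H.card ≤ B.card / 2 := by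
    have hmarkov : H.card * τ ≤ 2 * P.card * t :=
      (card_filter_lt_mul_le_sum B (fun b _ => Nat.cast_nonneg _) τ).trans
        (sum_radd_eq_sum_rsub_popDiff.trans_le sum_rsub_le_two_mul_card_popDiff)
    have : H.card * (4 * l) * (P.card * t) ≤ A.card * (P.card * t) := by
      simp only [τ] at hmarkov
      rw [mul_div_assoc', div_le_iff₀ hn] at hmarkov
      linarith
    nlinarith [le_of_mul_le_mul_right this hPt]
  have hcover : ((richPart A B t).card : ℝ) ≤ ((richPart A B t).filter fun b =>
      (radd P B b : ℝ) ≤ τ).card + H.card := by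
    rw [← card_filter_add_card_filter_not (fun b => (radd P B b : ℝ) ≤ τ)]
    push_cast
    gcongr
    intro b hb
    simp only [mem_filter, not_le, richPart, H] at hb ⊢
    exact ⟨hb.1.1, hb.2⟩
  nlinarith

end Round

/-- `B'' ⊆ B ⊆ A` and `t` satisfy (i)–(iii), with `|B| ≥ |A|/2` and every other loss at most `K`. -/
structure IsRegularization (k : ℕ) (A B B'' : Finset ℝ) (t K : ℝ) : Prop where
  subset : B'' ⊆ B
  subset_left : B ⊆ A
  one_le : 1 ≤ t
  le_card : t ≤ B.card
  card_le_two_mul : (A.card : ℝ) ≤ 2 * B.card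
  card_le_mul : (B.card : ℝ) ≤ K * B''.card
  card_popDiff_mul_pow_le : ((popDiff B t).card : ℝ) * t ^ k ≤ Ek k B
  Ek_le : (Ek k B : ℝ) ≤ K * (popDiff B t).card * t ^ k
  le_radd : ∀ b ∈ B'', ((popDiff B t).card : ℝ) * t / A.card ≤ K * radd (popDiff B t) B b
  radd_le : ∀ b ∈ B'', (radd (popDiff B t) B b : ℝ) ≤ K * (popDiff B t).card * t / A.card

lemma exists_isRegularization_or_Ek_sdiff_le {k : ℕ} (hk : k ≠ 0) {A B : Finset ℝ} {L : ℕ}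
    (hA : A.card < 2 ^ L) (hBA : B ⊆ A) (hBcard : (A.card : ℝ) ≤ 2 * B.card) (hB : B.Nonempty)
    {l : ℝ} (hl : 2 ^ k * L ≤ l) :
    (∃ B'' t, IsRegularization k A B B'' t (8 * l)) ∨
      ∃ G, G.Nonempty ∧ G ⊆ B ∧ l * G.card < B.card ∧
        (Ek k (B \ G) : ℝ) ≤ (1 - 1 / (2 ^ (k + 1) * L)) * Ek k B := by
  obtain ⟨j, hj⟩ := exists_Ek_le_card_popDiff k ((card_le_card hBA).trans_lt hA)
  set t : ℝ := 2 ^ j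
  set P := popDiff B t
  have ht : 1 ≤ t := one_le_pow₀ one_le_two
  have hL : (1 : ℝ) ≤ L := by
    have := hB.card_pos.trans_le (card_le_card hBA)
    have : L ≠ 0 := by rintro rfl; rw [pow_zero] at hA; omega
    exact_mod_cast Nat.one_le_iff_ne_zero.2 this
  have hl1 : 1 ≤ l := le_trans (by nlinarith [one_le_pow₀ (M₀ := ℝ) (n := k) one_le_two]) hl
  have hEpos : (0 : ℝ) < Ek k B := by
    have := card_sq_le_Ek hk B
    exact_mod_cast (pow_pos hB.card_pos 2).trans_le this
  have hP : P.Nonempty := by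
    rw [← card_pos]
    by_contra h0
    simp only [not_lt, nonpos_iff_eq_zero] at h0
    have : (Ek k B : ℝ) ≤ 0 := by simpa [P, h0] using hj
    linarith
  have hmass := card_popDiff_mul_le_two_mul_sum_radd_richPart hBA (t := t) (by positivity)
  rcases le_or_gt (B.card : ℝ) (l * (richPart A B t).card) with hstop | hgo
  · refine Or.inl ⟨(richPart A B t).filter fun b =>
      (radd P B b : ℝ) ≤ 8 * l * P.card * t / A.card, t,
      (filter_subset _ _).trans (filter_subset _ _), hBA, ht,
      le_card_of_popDiff_nonempty hP, hBcard, ?_, card_popDiff_mul_pow_le_Ek k (by positivity),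
      ?_, fun b hb => ?_, fun b hb => (mem_filter.1 hb).2⟩
    · exact (card_le_two_mul_card_filter_radd_le hBA hBcard (by positivity) hP
        (by positivity) hstop).trans (by gcongr; linarith)
    · refine hj.trans ?_
      have : 0 ≤ (P.card : ℝ) * t ^ k := by positivity
      nlinarith
    · have hn : (0 : ℝ) < A.card := by exact_mod_cast hB.card_pos.trans_le (card_le_card hBA)
      have := (mem_filter.1 (mem_filter.1 hb).1).2
      rw [div_le_iff₀ hn]
      have : 0 ≤ (A.card : ℝ) * radd P B b := by positivity
      nlinarith
  · refine Or.inr ⟨richPart A B t, ?_, filter_subset _ _, hgo, Ek_sdiff_richPart_le hk hBA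
      (by positivity) (by positivity) hj⟩
    rw [nonempty_iff_ne_empty]
    rintro h
    rw [h, sum_empty] at hmass
    have := hP.card_pos
    have : (0 : ℝ) < P.card * t := by positivity
    linarith

lemma sixteen_mul_pow_le_exp {n : ℝ} (hn : 0 ≤ n) {L : ℕ} (hL : L ≠ 0) (hnL : n ≤ 2 ^ L) (k : ℕ) :
    16 * n ^ k ≤ Real.exp ((k + 4) * L) := by
  have h2L : (2 : ℝ) ≤ 2 ^ L := le_self_pow₀ one_le_two hL
  calc 16 * n ^ k ≤ ((2 : ℝ) ^ L) ^ 4 * (2 ^ L) ^ k := by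
        gcongr
        calc (16 : ℝ) = 2 ^ 4 := by norm_num
          _ ≤ (2 ^ L) ^ 4 := by gcongr
    _ = 2 ^ ((k + 4) * L) := by ring
    _ ≤ Real.exp 1 ^ ((k + 4) * L) := by gcongr; linarith [Real.add_one_le_exp 1]
    _ = Real.exp ((k + 4) * L) := by rw [← Real.exp_nat_mul]; push_cast; ring_nf

/-- `s = |B|` after `M` removal rounds from a set of size `n`: if `s < n/2` then `M > l/2` with
`l = 2^{k+2}(k+3)L²`, and the energy bound would force `s² < n²/16`. -/
lemma half_le_of_sq_le_one_sub_pow {k L M : ℕ} (hk : k ≠ 0) (hL : L ≠ 0) {n s : ℝ} (hn : 0 < n)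
    (hnL : n ≤ 2 ^ L) (hs : n / 4 ≤ s)
    (hM : 2 ^ (k + 2) * (k + 3) * L ^ 2 * (n - s) ≤ M * n)
    (hE : s ^ 2 ≤ (1 - 1 / (2 ^ (k + 1) * L)) ^ M * n ^ (k + 1)) : n / 2 ≤ s := by
  obtain ⟨k, rfl⟩ := Nat.exists_eq_add_of_le' (Nat.one_le_iff_ne_zero.2 hk)
  by_contra! hsn
  set ε : ℝ := 1 / (2 ^ (k + 2) * L)
  have hLpos : (0 : ℝ) < L := by exact_mod_cast Nat.pos_of_ne_zero hL
  have hε : 0 ≤ ε := by positivity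
  have hMε : (k + 4) * L < ε * M := by
    have hl : (0 : ℝ) < 2 ^ (k + 3) * (k + 4) * L ^ 2 := by positivity
    have hlM : 2 ^ (k + 3) * (k + 4) * L ^ 2 * n < 2 * M * n := by
      have := mul_lt_mul_of_pos_left (show n / 2 < n - s by linarith) hl
      have : 2 ^ (k + 3) * (k + 4) * L ^ 2 * (n - s) ≤ M * n := by
        refine le_trans (le_of_eq ?_) hM; push_cast; ring
      linarith
    have := lt_of_mul_lt_mul_right hlM hn.le
    calc ((k : ℝ) + 4) * L = ε * (2 ^ (k + 3) * (k + 4) * L ^ 2 / 2) := by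
          simp only [ε]; field_simp; ring
      _ < ε * M := by gcongr; linarith
  have hdecay : (1 - ε) ^ M < Real.exp (-((k + 4) * L)) :=
    calc (1 - ε) ^ M ≤ Real.exp (-ε) ^ M := by
          gcongr
          · rw [sub_nonneg, div_le_one (by positivity)]
            nlinarith [one_le_pow₀ (M₀ := ℝ) (n := k + 2) one_le_two,
              (by exact_mod_cast Nat.one_le_iff_ne_zero.2 hL : (1 : ℝ) ≤ L)]
          · exact Real.one_sub_le_exp_neg ε
      _ = Real.exp (-(ε * M)) := by rw [← Real.exp_nat_mul]; ring_nf
      _ < Real.exp (-((k + 4) * L)) := by gcongr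
  have h16 := sixteen_mul_pow_le_exp hn.le hL hnL k
  have : s ^ 2 < n ^ 2 / 16 := by
    calc s ^ 2 ≤ (1 - ε) ^ M * n ^ (k + 1 + 1) := by simpa [ε, pow_succ] using hE
      _ = (1 - ε) ^ M * (n ^ 2 * n ^ k) := by ring
      _ < Real.exp (-((k + 4) * L)) * (n ^ 2 * n ^ k) :=
          mul_lt_mul_of_pos_right hdecay (by positivity)
      _ ≤ n ^ 2 / 16 := by
        rw [Real.exp_neg, ← div_eq_inv_mul, div_le_div_iff₀ (Real.exp_pos _) (by norm_num)]
        nlinarith [sq_nonneg n]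
  nlinarith

/-- Strong induction on `B`, the set reached after `M` removal rounds. -/
lemma exists_isRegularization_of_Ek_le {k L : ℕ} (hk : k ≠ 0) {A : Finset ℝ} (hA : A.Nonempty)
    (hAL : A.card < 2 ^ L) (B : Finset ℝ) (hBA : B ⊆ A) (hBcard : (A.card : ℝ) ≤ 2 * B.card)
    (M : ℕ) (hM : 2 ^ (k + 2) * (k + 3) * L ^ 2 * (A.card - B.card : ℝ) ≤ M * A.card)
    (hE : (Ek k B : ℝ) ≤ (1 - 1 / (2 ^ (k + 1) * L)) ^ M * A.card ^ (k + 1)) :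
    ∃ B B'' t, IsRegularization k A B B'' t (8 * (2 ^ (k + 2) * (k + 3) * L ^ 2)) := by
  induction B using Finset.strongInduction generalizing M with
  | H B ih =>
  set l : ℝ := 2 ^ (k + 2) * (k + 3) * L ^ 2
  have hn : (0 : ℝ) < A.card := by exact_mod_cast hA.card_pos
  have hL : L ≠ 0 := by rintro rfl; rw [pow_zero] at hAL; have := hA.card_pos; omega
  have hL1 : (1 : ℝ) ≤ L := by exact_mod_cast Nat.one_le_iff_ne_zero.2 hL
  have hB : B.Nonempty := by
    rw [← card_pos]; exact_mod_cast (show (0 : ℝ) < B.card by linarith)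
  have hl : 2 ^ k * (L : ℝ) ≤ l := by
    have : (2 : ℝ) ^ k ≤ 2 ^ (k + 2) * (k + 3) := by
      rw [pow_add]; nlinarith [pow_pos (two_pos (α := ℝ)) k, (Nat.cast_nonneg k : (0 : ℝ) ≤ k)]
    calc 2 ^ k * (L : ℝ) ≤ 2 ^ (k + 2) * (k + 3) * L := by gcongr
      _ ≤ l := by simp only [l]; gcongr; nlinarith
  have hl4 : 4 ≤ l := by
    have h4 : (4 : ℝ) ≤ 2 ^ (k + 2) := by
      rw [pow_add]; nlinarith [one_le_pow₀ (M₀ := ℝ) (n := k) one_le_two]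
    have h1 : (1 : ℝ) ≤ (k + 3) * L ^ 2 := one_le_mul_of_one_le_of_one_le (by linarith [
      (Nat.cast_nonneg k : (0 : ℝ) ≤ k)]) (one_le_pow₀ hL1)
    simp only [l, mul_assoc]
    nlinarith
  rcases exists_isRegularization_or_Ek_sdiff_le hk hAL hBA hBcard hB hl with
    ⟨B'', t, h⟩ | ⟨G, hG, hGB, hGl, hEG⟩
  · exact ⟨B, B'', t, h⟩
  have hcard : ((B \ G).card : ℝ) = B.card - G.card := by
    rw [card_sdiff_of_subset hGB, Nat.cast_sub (card_le_card hGB)]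
  have hBn : (B.card : ℝ) ≤ A.card := by exact_mod_cast card_le_card hBA
  have hM' : l * (A.card - (B \ G).card : ℝ) ≤ (M + 1 : ℕ) * A.card := by
    rw [hcard]; push_cast; nlinarith
  have hE' : (Ek k (B \ G) : ℝ) ≤ (1 - 1 / (2 ^ (k + 1) * L)) ^ (M + 1) * A.card ^ (k + 1) := by
    set ε : ℝ := 1 / (2 ^ (k + 1) * L)
    have hε : 0 ≤ 1 - ε := by
      rw [sub_nonneg, div_le_one (by positivity)]
      nlinarith [one_le_pow₀ (M₀ := ℝ) (n := k + 1) one_le_two]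
    calc (Ek k (B \ G) : ℝ) ≤ (1 - ε) * Ek k B := hEG
      _ ≤ (1 - ε) * ((1 - ε) ^ M * A.card ^ (k + 1)) := mul_le_mul_of_nonneg_left hE hε
      _ = (1 - ε) ^ (M + 1) * A.card ^ (k + 1) := by ring
  refine ih (B \ G) (sdiff_ssubset hGB hG) (sdiff_subset.trans hBA) ?_ (M + 1) hM' hE'
  have hquarter : (A.card : ℝ) / 4 ≤ (B \ G).card := by
    rw [hcard]; nlinarith
  have := half_le_of_sq_le_one_sub_pow hk hL hn (by exact_mod_cast hAL.le) hquarter hM'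
    (le_trans (by exact_mod_cast card_sq_le_Ek hk (B \ G)) hE')
  linarith

lemma exists_isRegularization {k : ℕ} (hk : k ≠ 0) {A : Finset ℝ} (hA : A.Nonempty) :
    ∃ B B'' t, IsRegularization k A B B'' t
      (8 * (2 ^ (k + 2) * (k + 3) * ((Nat.log 2 A.card + 1 : ℕ) : ℝ) ^ 2)) :=
  exists_isRegularization_of_Ek_le hk hA (Nat.lt_pow_succ_log_self one_lt_two _) A subset_rfl
    (by linarith [(Nat.cast_nonneg A.card : (0 : ℝ) ≤ A.card)]) 0 (by simp)
    (by simpa using (Nat.cast_le (α := ℝ)).2 (Ek_le_card_pow hk A))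

lemma natLog_add_one_mul_log_two_le {n : ℕ} (hn : 2 ≤ n) :
    ((Nat.log 2 n + 1 : ℕ) : ℝ) * Real.log 2 ≤ 2 * Real.log n := by
  have hlog := Real.natLog_le_logb n 2
  have hκ : 0 < Real.log 2 := Real.log_pos one_lt_two
  have h2n : Real.log 2 ≤ Real.log n := Real.log_le_log two_pos (by exact_mod_cast hn)
  rw [Real.logb, Nat.cast_ofNat, le_div_iff₀ hκ] at hlog
  push_cast
  linarith

lemma IsRegularization.one_le_loss {k : ℕ} {A B B'' : Finset ℝ} {t K : ℝ}
    (h : IsRegularization k A B B'' t K) : 1 ≤ K := by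
  have hB : (1 : ℝ) ≤ B.card := h.one_le.trans h.le_card
  have hB'' : (B''.card : ℝ) ≤ B.card := by exact_mod_cast card_le_card h.subset
  have hpos : (0 : ℝ) < B''.card := by
    rcases (B''.card).eq_zero_or_pos with h0 | h0
    · have := h.card_le_mul; rw [h0, Nat.cast_zero, mul_zero] at this; linarith
    · exact_mod_cast h0
  by_contra! hK
  nlinarith [h.card_le_mul, mul_pos (sub_pos.2 hK) hpos]

lemma IsRegularization.rpow_bounds {k : ℕ} {A B B'' : Finset ℝ} {t K : ℝ}
    (h : IsRegularization k A B B'' t K) {c C X γ : ℝ} (hX : 0 < X) (hc : 0 < c)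
    (hc2 : c ≤ 1 / 2) (hcK : c * K ≤ X ^ γ) (hKC : K ≤ C * X ^ γ) :
    c * (A.card : ℝ) ≤ (B.card : ℝ) ∧
    c * (B.card : ℝ) * X ^ (-γ) ≤ (B''.card : ℝ) ∧
    c * X ^ (-γ) * ((popDiff B t).card : ℝ) * t ^ k ≤ (Ek k B : ℝ) ∧
    (Ek k B : ℝ) ≤ C * X ^ γ * ((popDiff B t).card : ℝ) * t ^ k ∧
    ∀ b ∈ B'',
      c * X ^ (-γ) * ((popDiff B t).card : ℝ) * t / (A.card : ℝ) ≤ (radd (popDiff B t) B b : ℝ) ∧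
      (radd (popDiff B t) B b : ℝ) ≤ C * X ^ γ * ((popDiff B t).card : ℝ) * t / (A.card : ℝ) := by
  have hY : 0 < X ^ γ := Real.rpow_pos_of_pos hX γ
  have hcY : c * X ^ (-γ) * K ≤ 1 := by
    rw [Real.rpow_neg hX.le, mul_right_comm, ← div_eq_mul_inv, div_le_one hY]; exact hcK
  have hK := h.one_le_loss
  have hcY1 : c * X ^ (-γ) ≤ 1 := le_trans (le_mul_of_one_le_right (by positivity) hK) hcY
  have hPt : 0 ≤ ((popDiff B t).card : ℝ) * t := by have := h.one_le; positivity
  refine ⟨by nlinarith [h.card_le_two_mul], ?_, ?_, ?_, fun b hb => ⟨?_, ?_⟩⟩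
  · nlinarith [h.card_le_mul, mul_le_mul_of_nonneg_right hcY (Nat.cast_nonneg (α := ℝ) B''.card)]
  · nlinarith [h.card_popDiff_mul_pow_le, mul_le_mul_of_nonneg_right hcY1
      (by have := h.one_le; positivity : (0 : ℝ) ≤ (popDiff B t).card * t ^ k)]
  · have : 0 ≤ ((popDiff B t).card : ℝ) * t ^ k := by have := h.one_le; positivity
    nlinarith [h.Ek_le]
  · calc c * X ^ (-γ) * (popDiff B t).card * t / A.card
          = c * X ^ (-γ) * ((popDiff B t).card * t / A.card) := by ring
      _ ≤ c * X ^ (-γ) * (K * radd (popDiff B t) B b) := by gcongr; exact h.le_radd b hb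
      _ ≤ radd (popDiff B t) B b := by
          rw [← mul_assoc]; exact mul_le_of_le_one_left (Nat.cast_nonneg _) hcY
  · refine (h.radd_le b hb).trans (div_le_div_of_nonneg_right ?_ (Nat.cast_nonneg _))
    rw [mul_assoc, mul_assoc (C * X ^ γ)]
    exact mul_le_mul_of_nonneg_right hKC hPt

lemma regularization_loss_mul_log_two_sq_le (k : ℕ) {n : ℕ} (hn : 2 ≤ n) :
    8 * (2 ^ (k + 2) * (k + 3) * ((Nat.log 2 n + 1 : ℕ) : ℝ) ^ 2) * Real.log 2 ^ 2 ≤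
      2 ^ (k + 7) * (k + 3) * Real.log n ^ 2 := by
  have hL := natLog_add_one_mul_log_two_le hn
  have hsq : (((Nat.log 2 n + 1 : ℕ) : ℝ) * Real.log 2) ^ 2 ≤ (2 * Real.log n) ^ 2 :=
    pow_le_pow_left₀ (by have := Real.log_pos one_lt_two; positivity) hL 2
  have : (0 : ℝ) ≤ 2 ^ (k + 5) * (k + 3) := by positivity
  calc _ = 2 ^ (k + 5) * (k + 3) * (((Nat.log 2 n + 1 : ℕ) : ℝ) * Real.log 2) ^ 2 := by ring
    _ ≤ 2 ^ (k + 5) * (k + 3) * (2 * Real.log n) ^ 2 := by gcongr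
    _ = _ := by ring

theorem rudnev_stevens_regularization (k : ℕ) (hk : 1 < k) :
    ∃ C c γ : ℝ, 0 < C ∧ 0 < c ∧ 0 ≤ γ ∧
      ∀ A : Finset ℝ, 2 ≤ A.card →
        ∃ B B'' : Finset ℝ, B'' ⊆ B ∧ B ⊆ A ∧
          ∃ t : ℝ, 1 ≤ t ∧ t ≤ (B.card : ℝ) ∧
            -- (i)
            c * (A.card : ℝ) ≤ (B.card : ℝ) ∧
            c * (B.card : ℝ) * Real.log (A.card : ℝ) ^ (-γ) ≤ (B''.card : ℝ) ∧
            -- (ii)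
            c * Real.log (A.card : ℝ) ^ (-γ) * ((popDiff B t).card : ℝ) * t ^ k ≤
              (Ek k B : ℝ) ∧
            (Ek k B : ℝ) ≤
              C * Real.log (A.card : ℝ) ^ γ * ((popDiff B t).card : ℝ) * t ^ k ∧
            -- (iii)
            ∀ b ∈ B'',
              c * Real.log (A.card : ℝ) ^ (-γ) * ((popDiff B t).card : ℝ) * t /
                  (A.card : ℝ) ≤ (radd (popDiff B t) B b : ℝ) ∧
              (radd (popDiff B t) B b : ℝ) ≤
                C * Real.log (A.card : ℝ) ^ γ * ((popDiff B t).card : ℝ) * t /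
                  (A.card : ℝ) := by
  set κ := Real.log 2
  set a : ℝ := 2 ^ (k + 7) * (k + 3)
  have hκ : 0 < κ := Real.log_pos one_lt_two
  have hκ1 : κ < 1 := by linarith [Real.log_two_lt_d9]
  have ha : 2 ≤ a := (le_self_pow₀ one_le_two (by omega)).trans
    (le_mul_of_one_le_right (by positivity) (by linarith))
  refine ⟨a / κ ^ 3, κ ^ 3 / a, 3, by positivity, by positivity, by norm_num, fun A hA => ?_⟩
  obtain ⟨B, B'', t, h⟩ :=
    exists_isRegularization (k := k) (A := A) (by omega) (card_pos.1 (by omega))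
  have hℓ : κ ≤ Real.log A.card := Real.log_le_log two_pos (by exact_mod_cast hA)
  have hK := regularization_loss_mul_log_two_sq_le k hA
  set K := 8 * (2 ^ (k + 2) * (k + 3) * ((Nat.log 2 A.card + 1 : ℕ) : ℝ) ^ 2)
  have hκK : κ * (K * κ ^ 2) ≤ Real.log A.card * (a * Real.log A.card ^ 2) :=
    mul_le_mul hℓ hK (by positivity) (hκ.le.trans hℓ)
  have h3 : Real.log A.card ^ (3 : ℝ) = Real.log A.card ^ 3 := Real.rpow_ofNat _ 3
  refine ⟨B, B'', h.subset, h.subset_left, t, h.one_le, h.le_card,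
    h.rpow_bounds (hκ.trans_le hℓ) (by positivity) ?_ ?_ ?_⟩
  · calc κ ^ 3 / a ≤ 1 / a := by gcongr; exact pow_le_one₀ hκ.le hκ1.le
      _ ≤ 1 / 2 := by gcongr
  · rw [h3, div_mul_eq_mul_div, div_le_iff₀ (by positivity)]; linarith
  · rw [h3, div_mul_eq_mul_div, le_div_iff₀ (by positivity)]; linarith
end
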